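/- arXiv:1711.03149 — 8 statements merged into one kernel-verified Lean document; each statement's English description precedes it below -/
import Mathlib

section
/- (Theorem 2, adjusted likelihoods + averaging: optimal contraction rate.) For every β, M, σ > 0, every sequence M_n → ∞, and every sequence of machine counts m_n → ∞, the supremum over θ₀ ∈ H^β(M) of the expected aggregated posterior mass outside the ball of radius M_n·n^{-β/(1+2β)} around θ₀ tends to 0 as n → ∞; that is, sup_{θ₀ ∈ H^β(M)} P( ‖θ̂ + t·W − θ₀‖₂ ≥ M_n·n^{-β/(1+2β)} ) → 0 as n → ∞ with m = m_n. -/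
open MeasureTheory ProbabilityTheory Filter

/-- The hyperrectangle `H^β(M)` of `β`-regular signals in `ℓ²`, indexed so that
coordinate `i : ℕ` corresponds to the integer `i + 1`. -/
def hyperRect (β M : ℝ) : Set (ℕ → ℝ) :=
  {θ | (Summable fun i => (θ i) ^ 2) ∧
    ∀ i : ℕ, ((i : ℝ) + 1) ^ (1 + 2 * β) * (θ i) ^ 2 ≤ M ^ 2}

/-- The noise variables `(Z^j_i)` together with the posterior-sampling variables `(W_i)`
form an i.i.d. standard Gaussian family. -/
def iidStdGauss {Ω : Type*} [MeasurableSpace Ω] (P : Measure Ω)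
    (Z : ℕ → ℕ → Ω → ℝ) (W : ℕ → Ω → ℝ) : Prop :=
  iIndepFun
      (Sum.elim (fun p : ℕ × ℕ => Z p.1 p.2) W) P ∧
    ∀ a : (ℕ × ℕ) ⊕ ℕ,
      Measure.map (Sum.elim (fun p : ℕ × ℕ => Z p.1 p.2) W a) P = gaussianReal 0 1

/-- Local data: `Y^j_i = θ₀,ᵢ + sqrt(σ² m / n) Z^j_i`. -/
noncomputable def dataY (σ n : ℝ) (m : ℕ) (θ0 : ℕ → ℝ) {Ω : Type*}
    (Z : ℕ → ℕ → Ω → ℝ) (j i : ℕ) (ω : Ω) : ℝ :=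
  θ0 i + Real.sqrt (σ ^ 2 * m / n) * Z j i ω

/-- Method II (likelihoods raised to the power `m`, then averaging): aggregated posterior
mean `θ̂ᵢ = (1/m) Σ_{j<m} n Y^j_i / (n + σ² i^{1+2β})`. -/
noncomputable def postMeanII (σ β n : ℝ) (m : ℕ) (θ0 : ℕ → ℝ) {Ω : Type*}
    (Z : ℕ → ℕ → Ω → ℝ) (ω : Ω) (i : ℕ) : ℝ :=
  (1 / (m : ℝ)) * ∑ j ∈ Finset.range m,
    n * dataY σ n m θ0 Z j i ω / (n + σ ^ 2 * ((i : ℝ) + 1) ^ (1 + 2 * β))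

/-- Method II: aggregated posterior coordinate variances `tᵢ² = σ²/(m (n + σ² i^{1+2β}))`. -/
noncomputable def postVarII (σ β n : ℝ) (m : ℕ) (i : ℕ) : ℝ :=
  σ ^ 2 / ((m : ℝ) * (n + σ ^ 2 * ((i : ℝ) + 1) ^ (1 + 2 * β)))

/-! Each coordinate of a posterior draw minus the truth is an affine combination
`-σ² i^{1+2β} θ₀ᵢ / Dᵢ + bᵢ Σⱼ Z^j_i + tᵢ Wᵢ` of independent standard Gaussians, where
`Dᵢ = n + σ² i^{1+2β}`. Its second moment, squared bias plus variance, is at most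
`(M² + 2) σ² / Dᵢ` on `H^β(M)` once `m ≥ 1`. Splitting `Σᵢ 1 / Dᵢ` at `i ≈ n^{1/(1+2β)}`
bounds it by a multiple of `n^{-2β/(1+2β)}`, the squared contraction rate, and Markov's
inequality for `‖θ̂ + t W - θ₀‖²` then gives the claim as soon as `M_n² ≥ C / ε`. -/

section SecondMoments

variable {Ω ι : Type*} [MeasurableSpace Ω] {P : Measure Ω}

theorem memLp_const_add_sum_mul [IsFiniteMeasure P] {G : ι → Ω → ℝ}
    (hG : ∀ t, MemLp (G t) 2 P) (T : Finset ι) (a : ℝ) (c : ι → ℝ) :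
    MemLp (fun ω => a + ∑ t ∈ T, c t * G t ω) 2 P := by
  have := (memLp_const a).add (memLp_finsetSum' T fun t _ => (hG t).const_mul (c t))
  convert this using 1
  ext ω
  simp [Finset.sum_apply]

theorem integral_const_add_sum_mul_sq [IsProbabilityMeasure P] {G : ι → Ω → ℝ}
    (hG : ∀ t, MemLp (G t) 2 P) (hmean : ∀ t, P[G t] = 0) (hvar : ∀ t, Var[G t; P] = 1)
    (hind : Pairwise fun s t => G s ⟂ᵢ[P] G t) (T : Finset ι) (a : ℝ) (c : ι → ℝ) :
    ∫ ω, (a + ∑ t ∈ T, c t * G t ω) ^ 2 ∂P = a ^ 2 + ∑ t ∈ T, c t ^ 2 := by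
  have hcG : ∀ t, MemLp (fun ω => c t * G t ω) 2 P := fun t => (hG t).const_mul (c t)
  set V : Ω → ℝ := ∑ t ∈ T, fun ω => c t * G t ω with hVdef
  have hV : MemLp V 2 P := memLp_finsetSum' T fun t _ => hcG t
  have hmeanV : P[V] = 0 := by
    simp only [hVdef, Finset.sum_apply]
    rw [integral_finsetSum T fun t _ => (hcG t).integrable one_le_two]
    simp [integral_const_mul, hmean]
  have hvarV : Var[V; P] = ∑ t ∈ T, c t ^ 2 := by
    rw [IndepFun.variance_sum (fun t _ => hcG t) fun s _ t _ hst =>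
      (hind hst).comp (measurable_const_mul (c s)) (measurable_const_mul (c t))]
    simp [variance_const_mul, hvar]
  have key := variance_eq_sub (X := fun ω => a + V ω) ((memLp_const a).add hV)
  rw [variance_const_add hV.aestronglyMeasurable, hvarV,
    integral_add (integrable_const a) (hV.integrable one_le_two), hmeanV] at key
  simp only [Pi.pow_apply, integral_const, probReal_univ, smul_eq_mul, one_mul, add_zero,
    hVdef, Finset.sum_apply] at key
  linarith

theorem measure_sqrt_tsum_sq_ge_le {X : ℕ → Ω → ℝ} (hX : ∀ i, MemLp (X i) 2 P) {v : ℕ → ℝ}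
    (hXv : ∀ i, ∫ ω, X i ω ^ 2 ∂P ≤ v i) (hv : Summable v) {R : ℝ} (hR : 0 < R) :
    P {ω | Real.sqrt (∑' i, X i ω ^ 2) ≥ R} ≤ ENNReal.ofReal ((∑' i, v i) / R ^ 2) := by
  set F : Ω → ENNReal := fun ω => ∑' i, ENNReal.ofReal (X i ω ^ 2)
  have hsq_meas : ∀ i, AEMeasurable (fun ω => ENNReal.ofReal (X i ω ^ 2)) P :=
    fun i => ENNReal.measurable_ofReal.comp_aemeasurable ((hX i).aemeasurable.pow_const 2)
  have hsub : {ω | Real.sqrt (∑' i, X i ω ^ 2) ≥ R} ⊆ {ω | ENNReal.ofReal (R ^ 2) ≤ F ω} := by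
    intro ω hω
    have hs : Summable fun i => X i ω ^ 2 := by
      by_contra hs
      simp [tsum_eq_zero_of_not_summable hs] at hω
      linarith
    have hR2 : R ^ 2 ≤ ∑' i, X i ω ^ 2 :=
      (Real.le_sqrt hR.le (tsum_nonneg fun i => sq_nonneg _)).1 hω
    show ENNReal.ofReal (R ^ 2) ≤ ∑' i, ENNReal.ofReal (X i ω ^ 2)
    rw [← ENNReal.ofReal_tsum_of_nonneg (fun i => sq_nonneg _) hs]
    exact ENNReal.ofReal_le_ofReal hR2
  have hlint : ∫⁻ ω, F ω ∂P ≤ ENNReal.ofReal (∑' i, v i) := by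
    have hv0 : ∀ i, 0 ≤ v i := fun i => (integral_nonneg fun ω => sq_nonneg _).trans (hXv i)
    rw [lintegral_tsum hsq_meas, ENNReal.ofReal_tsum_of_nonneg hv0 hv]
    refine ENNReal.tsum_le_tsum fun i => ?_
    rw [← ofReal_integral_eq_lintegral_ofReal (hX i).integrable_sq
      (ae_of_all _ fun ω => sq_nonneg _)]
    exact ENNReal.ofReal_le_ofReal (hXv i)
  have hR2 : ENNReal.ofReal (R ^ 2) ≠ 0 := (ENNReal.ofReal_pos.2 (by positivity)).ne'
  calc P {ω | Real.sqrt (∑' i, X i ω ^ 2) ≥ R} ≤ P {ω | ENNReal.ofReal (R ^ 2) ≤ F ω} :=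
        measure_mono hsub
    _ ≤ (∫⁻ ω, F ω ∂P) / ENNReal.ofReal (R ^ 2) :=
        meas_ge_le_lintegral_div (AEMeasurable.tsum hsq_meas) hR2 ENNReal.ofReal_ne_top
    _ ≤ ENNReal.ofReal (∑' i, v i) / ENNReal.ofReal (R ^ 2) := by gcongr
    _ = ENNReal.ofReal ((∑' i, v i) / R ^ 2) := (ENNReal.ofReal_div_of_pos (by positivity)).symm

end SecondMoments

theorem inv_add_mul_rpow_le {c q n : ℝ} (hc : 0 < c) (hn : 0 ≤ n) (i : ℕ) :
    (n + c * ((i : ℝ) + 1) ^ q)⁻¹ ≤ c⁻¹ * ((i + 1 : ℕ) : ℝ) ^ (-q) := by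
  have hpos : 0 < c * ((i : ℝ) + 1) ^ q := by positivity
  rw [Real.rpow_neg (by positivity), ← mul_inv, Nat.cast_add_one]
  exact inv_anti₀ hpos (by linarith)

theorem summable_inv_add_mul_rpow {c q n : ℝ} (hc : 0 < c) (hq : 1 < q) (hn : 0 ≤ n) :
    Summable fun i : ℕ => (n + c * ((i : ℝ) + 1) ^ q)⁻¹ :=
  Summable.of_nonneg_of_le (fun i => by positivity) (inv_add_mul_rpow_le hc hn)
    (((summable_nat_add_iff 1).2 (Real.summable_nat_rpow.2 (by linarith))).mul_left _)

theorem tsum_rpow_neg_nat_add_le {q : ℝ} (hq : 1 < q) {K : ℕ} (hK : 0 < K) :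
    ∑' i : ℕ, ((i + K + 1 : ℕ) : ℝ) ^ (-q) ≤ (K : ℝ) ^ (1 - q) / (q - 1) := by
  have hK' : (0 : ℝ) < K := by exact_mod_cast hK
  have anti : AntitoneOn (fun x : ℝ => x ^ (-q)) (Set.Ici (K : ℝ)) :=
    (Real.antitoneOn_rpow_Ioi_of_exponent_nonpos (by linarith)).mono fun x hx => hK'.trans_le hx
  have h := anti.tsum_comp_add_le_integral K (integrableOn_Ioi_rpow_of_lt (by linarith) hK')
    fun x hx => Real.rpow_nonneg (hK'.trans hx).le _
  rw [integral_Ioi_rpow_of_lt (by linarith) hK'] at h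
  convert h using 1
  rw [show -q + 1 = 1 - q by ring, neg_div, ← div_neg, neg_sub]

theorem tsum_inv_add_mul_rpow_le {c q n : ℝ} (hc : 0 < c) (hq : 1 < q) (hn : 1 ≤ n) :
    ∑' i : ℕ, (n + c * ((i : ℝ) + 1) ^ q)⁻¹ ≤ (2 + (c * (q - 1))⁻¹) * n ^ (q⁻¹ - 1) := by
  have hn0 : 0 < n := one_pos.trans_le hn
  set f : ℕ → ℝ := fun i => (n + c * ((i : ℝ) + 1) ^ q)⁻¹
  set x := n ^ q⁻¹ with hx
  have hx1 : 1 ≤ x := Real.one_le_rpow hn (by positivity)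
  set K := ⌈x⌉₊
  have hxK : x ≤ K := Nat.le_ceil x
  have hK0 : 0 < K := by exact_mod_cast (show (0 : ℝ) < K by linarith)
  have head : ∑ i ∈ Finset.range K, f i ≤ 2 * n ^ (q⁻¹ - 1) := by
    calc ∑ i ∈ Finset.range K, f i ≤ ∑ _i ∈ Finset.range K, n⁻¹ :=
          Finset.sum_le_sum fun i _ => inv_anti₀ hn0 (le_add_of_nonneg_right (by positivity))
      _ = K / n := by simp [div_eq_mul_inv]
      _ ≤ 2 * x / n := by
          gcongr
          linarith [Nat.ceil_lt_add_one (zero_le_one.trans hx1)]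
      _ = 2 * n ^ (q⁻¹ - 1) := by rw [mul_div_assoc, Real.rpow_sub hn0, Real.rpow_one]
  have tail : ∑' i, f (i + K) ≤ (c * (q - 1))⁻¹ * n ^ (q⁻¹ - 1) := by
    calc ∑' i, f (i + K) ≤ ∑' i : ℕ, c⁻¹ * ((i + K + 1 : ℕ) : ℝ) ^ (-q) :=
          ((summable_nat_add_iff K).2 (summable_inv_add_mul_rpow hc hq hn0.le)).tsum_le_tsum
            (fun i => inv_add_mul_rpow_le hc hn0.le (i + K))
            (((summable_nat_add_iff (K + 1)).2 (Real.summable_nat_rpow.2 (by linarith))).mul_left _)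
      _ = c⁻¹ * ∑' i : ℕ, ((i + K + 1 : ℕ) : ℝ) ^ (-q) := tsum_mul_left
      _ ≤ c⁻¹ * ((K : ℝ) ^ (1 - q) / (q - 1)) := by
          gcongr; exact tsum_rpow_neg_nat_add_le hq hK0
      _ ≤ c⁻¹ * (x ^ (1 - q) / (q - 1)) := by
          gcongr ?_ * (?_ / _)
          exact Real.rpow_le_rpow_of_nonpos (by linarith) hxK (by linarith)
      _ = (c * (q - 1))⁻¹ * n ^ (q⁻¹ - 1) := by
          rw [hx, ← Real.rpow_mul hn0.le, show q⁻¹ * (1 - q) = q⁻¹ - 1 by field_simp, mul_inv]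
          ring
  rw [← (summable_inv_add_mul_rpow hc hq hn0.le).sum_add_tsum_nat_add K, add_mul]
  exact add_le_add head tail

noncomputable def postDenomII (σ β n : ℝ) (i : ℕ) : ℝ := n + σ ^ 2 * ((i : ℝ) + 1) ^ (1 + 2 * β)

noncomputable def postErrII (σ β n : ℝ) (m : ℕ) (θ0 : ℕ → ℝ) {Ω : Type*}
    (Z : ℕ → ℕ → Ω → ℝ) (W : ℕ → Ω → ℝ) (ω : Ω) (i : ℕ) : ℝ :=
  postMeanII σ β n m θ0 Z ω i + Real.sqrt (postVarII σ β n m i) * W i ω - θ0 i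

section MethodII

variable {Ω : Type*} {Z : ℕ → ℕ → Ω → ℝ} {W : ℕ → Ω → ℝ} {σ β n M : ℝ} {m : ℕ}
  {θ0 : ℕ → ℝ}

lemma postDenomII_pos (hn : 0 < n) (i : ℕ) : 0 < postDenomII σ β n i := by
  unfold postDenomII; positivity

-- The index `Sum.inl (j, i)` carries `Z^j_i` and `Sum.inr i` carries `Wᵢ`.
lemma postErrII_eq (hn : 0 < n) (hm : m ≠ 0) (i : ℕ) :
    (fun ω => postErrII σ β n m θ0 Z W ω i) = fun ω =>
      -(σ ^ 2 * ((i : ℝ) + 1) ^ (1 + 2 * β) * θ0 i / postDenomII σ β n i)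
        + ∑ t ∈ (Finset.range m ×ˢ {i}).disjSum {i},
          Sum.elim (fun _ => n * Real.sqrt (σ ^ 2 * m / n) / (m * postDenomII σ β n i))
            (fun _ => Real.sqrt (postVarII σ β n m i)) t
            * Sum.elim (fun p : ℕ × ℕ => Z p.1 p.2) W t ω := by
  have hD := (postDenomII_pos (σ := σ) (β := β) hn i).ne'
  have hm' : (m : ℝ) ≠ 0 := Nat.cast_ne_zero.2 hm
  unfold postDenomII at hD ⊢
  have hsum : ∀ ω, ∑ j ∈ Finset.range m,
      n * dataY σ n m θ0 Z j i ω / (n + σ ^ 2 * ((i : ℝ) + 1) ^ (1 + 2 * β))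
        = (m * (n * θ0 i) + n * Real.sqrt (σ ^ 2 * m / n) * ∑ j ∈ Finset.range m, Z j i ω)
          / (n + σ ^ 2 * ((i : ℝ) + 1) ^ (1 + 2 * β)) := by
    intro ω
    simp only [dataY, mul_add, add_div, Finset.sum_add_distrib, Finset.sum_const,
      Finset.card_range, nsmul_eq_mul, Finset.mul_sum, Finset.sum_div, mul_div_assoc, mul_assoc]
  ext ω
  simp only [postErrII, postMeanII, hsum, Finset.sum_disjSum, Finset.sum_product,
    Finset.sum_singleton, Sum.elim_inl, Sum.elim_inr, ← Finset.mul_sum]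
  field_simp
  ring

lemma postRiskII_le (hn : 0 < n) (hm : 1 ≤ m) {i : ℕ}
    (hθ : ((i : ℝ) + 1) ^ (1 + 2 * β) * θ0 i ^ 2 ≤ M ^ 2) :
    (σ ^ 2 * ((i : ℝ) + 1) ^ (1 + 2 * β) * θ0 i / postDenomII σ β n i) ^ 2
        + σ ^ 2 * n / postDenomII σ β n i ^ 2 + σ ^ 2 / (m * postDenomII σ β n i)
      ≤ (M ^ 2 + 2) * σ ^ 2 / postDenomII σ β n i := by
  set u : ℝ := ((i : ℝ) + 1) ^ (1 + 2 * β)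
  set D := postDenomII σ β n i with hD_def
  have hD : 0 < D := postDenomII_pos hn i
  have hu : 0 ≤ u := by positivity
  have huD : σ ^ 2 * u ≤ D := by simp only [hD_def, postDenomII]; linarith
  have hnD : n ≤ D := by simp only [hD_def, postDenomII]; nlinarith [sq_nonneg σ]
  have bias : (σ ^ 2 * u * θ0 i / D) ^ 2 ≤ M ^ 2 * σ ^ 2 / D := by
    rw [div_pow, div_le_div_iff₀ (by positivity) hD]
    calc (σ ^ 2 * u * θ0 i) ^ 2 * D = σ ^ 2 * (σ ^ 2 * u) * (u * θ0 i ^ 2) * D := by ring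
      _ ≤ σ ^ 2 * D * M ^ 2 * D := by gcongr
      _ = M ^ 2 * σ ^ 2 * D ^ 2 := by ring
  have local_var : σ ^ 2 * n / D ^ 2 ≤ σ ^ 2 / D := by
    rw [div_le_div_iff₀ (by positivity) hD]
    calc σ ^ 2 * n * D ≤ σ ^ 2 * D * D := by gcongr
      _ = σ ^ 2 * D ^ 2 := by ring
  have post_var : σ ^ 2 / (m * D) ≤ σ ^ 2 / D :=
    div_le_div_of_nonneg_left (sq_nonneg σ) hD (le_mul_of_one_le_left hD.le (by exact_mod_cast hm))
  linarith [show (M ^ 2 + 2) * σ ^ 2 / D = M ^ 2 * σ ^ 2 / D + σ ^ 2 / D + σ ^ 2 / D by ring]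

variable [MeasurableSpace Ω] {P : Measure Ω}

lemma iidStdGauss.hasLaw (h : iidStdGauss P Z W) (a : (ℕ × ℕ) ⊕ ℕ) :
    HasLaw (Sum.elim (fun p : ℕ × ℕ => Z p.1 p.2) W a) (gaussianReal 0 1) P :=
  ⟨aemeasurable_of_map_neZero (by rw [h.2 a]; infer_instance), h.2 a⟩

variable [IsProbabilityMeasure P]

lemma memLp_postErrII (hZW : iidStdGauss P Z W) (hn : 0 < n) (hm : m ≠ 0) (i : ℕ) :
    MemLp (fun ω => postErrII σ β n m θ0 Z W ω i) 2 P := by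
  rw [postErrII_eq hn hm]
  exact memLp_const_add_sum_mul (fun t => (hZW.hasLaw t).hasGaussianLaw.memLp_two) _ _ _

theorem integral_postErrII_sq (hZW : iidStdGauss P Z W) (hn : 0 < n) (hm : m ≠ 0) (i : ℕ) :
    ∫ ω, postErrII σ β n m θ0 Z W ω i ^ 2 ∂P
      = (σ ^ 2 * ((i : ℝ) + 1) ^ (1 + 2 * β) * θ0 i / postDenomII σ β n i) ^ 2
        + σ ^ 2 * n / postDenomII σ β n i ^ 2 + σ ^ 2 / (m * postDenomII σ β n i) := by
  have hrep := congrFun (postErrII_eq (σ := σ) (β := β) (θ0 := θ0) (Z := Z) (W := W) hn hm i)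
  simp only [hrep]
  rw [integral_const_add_sum_mul_sq (fun t => (hZW.hasLaw t).hasGaussianLaw.memLp_two)
    (fun t => (hZW.hasLaw t).integral_eq.trans integral_id_gaussianReal)
    (fun t => (hZW.hasLaw t).variance_eq.trans (by simp [variance_id_gaussianReal]))
    (fun s t hst => hZW.1.indepFun hst)]
  have hD := postDenomII_pos (σ := σ) (β := β) hn i
  have hm' : (0 : ℝ) < m := Nat.cast_pos.2 (Nat.pos_of_ne_zero hm)
  simp only [Finset.sum_disjSum, Sum.elim_inl, Sum.elim_inr, Finset.sum_const,
    Finset.card_product, Finset.card_range, Finset.card_singleton, nsmul_eq_mul, neg_sq,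
    Nat.cast_one, mul_one, one_mul]
  have hs : Real.sqrt (σ ^ 2 * m / n) ^ 2 = σ ^ 2 * m / n := Real.sq_sqrt (by positivity)
  have hv : postVarII σ β n m i = σ ^ 2 / (m * postDenomII σ β n i) := rfl
  have hv' : Real.sqrt (postVarII σ β n m i) ^ 2 = σ ^ 2 / (m * postDenomII σ β n i) := by
    rw [Real.sq_sqrt (by rw [hv]; positivity), hv]
  simp only [div_pow, mul_pow, hs, hv']
  field_simp
  ring

theorem measure_postErrII_ge_le (hZW : iidStdGauss P Z W) (hβ : 0 < β) (hσ : 0 < σ)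
    (hθ0 : θ0 ∈ hyperRect β M) (hn : 1 ≤ n) (hm : 1 ≤ m) {R : ℝ} (hR : 0 < R) :
    P {ω | Real.sqrt (∑' i, postErrII σ β n m θ0 Z W ω i ^ 2) ≥ R}
      ≤ ENNReal.ofReal ((M ^ 2 + 2) * σ ^ 2 * (2 + (σ ^ 2 * (2 * β))⁻¹)
          * n ^ ((1 + 2 * β)⁻¹ - 1) / R ^ 2) := by
  have hn0 : 0 < n := one_pos.trans_le hn
  have hm0 : m ≠ 0 := Nat.one_le_iff_ne_zero.1 hm
  have hq : 1 < 1 + 2 * β := by linarith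
  refine (measure_sqrt_tsum_sq_ge_le (memLp_postErrII hZW hn0 hm0)
    (v := fun i => (M ^ 2 + 2) * σ ^ 2 * (postDenomII σ β n i)⁻¹)
    (fun i => (integral_postErrII_sq hZW hn0 hm0 i).trans_le
      ((postRiskII_le hn0 hm (hθ0.2 i)).trans_eq (by ring)))
    ((summable_inv_add_mul_rpow (by positivity) hq hn0.le).mul_left _) hR).trans ?_
  have hseries := tsum_inv_add_mul_rpow_le (c := σ ^ 2) (by positivity) hq hn
  rw [show 1 + 2 * β - 1 = 2 * β by ring] at hseries
  refine ENNReal.ofReal_le_ofReal (div_le_div_of_nonneg_right ?_ (sq_nonneg R))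
  rw [tsum_mul_left, mul_assoc _ (2 + _)]
  exact mul_le_mul_of_nonneg_left hseries (by positivity)

end MethodII

theorem adjusted_likelihood_averaging_contraction_general
    {Ω : Type*} [MeasurableSpace Ω] (P : Measure Ω) [IsProbabilityMeasure P]
    (Z : ℕ → ℕ → Ω → ℝ) (W : ℕ → Ω → ℝ)
    (hZW : iidStdGauss P Z W)
    (β M σ : ℝ) (hβ : 0 < β) (hσ : 0 < σ)
    (Mseq : ℕ → ℝ) (hMseq : Tendsto Mseq atTop atTop)
    (mseq : ℕ → ℕ) (hmseq : Tendsto (fun n => (mseq n : ℝ)) atTop atTop) :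
    ∀ ε : ℝ, 0 < ε → ∃ N : ℕ, ∀ n : ℕ, N ≤ n →
      ∀ θ0 ∈ hyperRect β M,
        P {ω : Ω |
            Real.sqrt (∑' i : ℕ,
                (postMeanII σ β (n : ℝ) (mseq n) θ0 Z ω i
                  + Real.sqrt (postVarII σ β (n : ℝ) (mseq n) i) * W i ω - θ0 i) ^ 2)
              ≥ Mseq n * (n : ℝ) ^ (-(β / (1 + 2 * β)))}
          ≤ ENNReal.ofReal ε := by
  intro ε hε
  set C := (M ^ 2 + 2) * σ ^ 2 * (2 + (σ ^ 2 * (2 * β))⁻¹)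
  have hC : 0 ≤ C := by positivity
  obtain ⟨N, hN⟩ := eventually_atTop.1 ((eventually_ge_atTop 1).and
    ((hmseq.eventually_ge_atTop 1).and (hMseq.eventually_ge_atTop (C / ε + 1))))
  refine ⟨N, fun n hn θ0 hθ0 => ?_⟩
  obtain ⟨hn1, hm1, hMn⟩ := hN n hn
  have hn0 : (0 : ℝ) < n := by exact_mod_cast hn1
  have hCε : C ≤ ε * (Mseq n - 1) := by
    rw [← div_le_iff₀' hε]; linarith
  have hrate : ((n : ℝ) ^ (-(β / (1 + 2 * β)))) ^ 2 = (n : ℝ) ^ ((1 + 2 * β)⁻¹ - 1) := by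
    rw [← Real.rpow_natCast, ← Real.rpow_mul hn0.le]
    congr 1
    field_simp
    ring
  have hMpos : 0 < Mseq n := by linarith [div_nonneg hC hε.le]
  refine (measure_postErrII_ge_le hZW hβ hσ hθ0 (by exact_mod_cast hn1) (by exact_mod_cast hm1)
    (by positivity)).trans (ENNReal.ofReal_le_ofReal ?_)
  rw [mul_pow, hrate, mul_div_mul_right _ _ (by positivity), div_le_iff₀ (by positivity)]
  nlinarith

/-- Theorem 2 (adjusted likelihoods + averaging), contraction part: for every
`β, M, σ > 0`, every sequence `M_n → ∞` and every sequence of machine counts `m_n → ∞`,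
the expected aggregated posterior mass outside the ball of radius `M_n n^{-β/(1+2β)}`
around `θ₀` tends to `0` as `n → ∞`, uniformly over `θ₀ ∈ H^β(M)`. -/
theorem adjusted_likelihood_averaging_contraction
    {Ω : Type*} [MeasurableSpace Ω] (P : Measure Ω) [IsProbabilityMeasure P]
    (Z : ℕ → ℕ → Ω → ℝ) (W : ℕ → Ω → ℝ)
    (hZW : iidStdGauss P Z W)
    (β M σ : ℝ) (hβ : 0 < β) (hM : 0 < M) (hσ : 0 < σ)
    (Mseq : ℕ → ℝ) (hMseq : Tendsto Mseq atTop atTop)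
    (mseq : ℕ → ℕ) (hmseq : Tendsto (fun n => (mseq n : ℝ)) atTop atTop) :
    ∀ ε : ℝ, 0 < ε → ∃ N : ℕ, ∀ n : ℕ, N ≤ n →
      ∀ θ0 ∈ hyperRect β M,
        P {ω : Ω |
            Real.sqrt (∑' i : ℕ,
                (postMeanII σ β (n : ℝ) (mseq n) θ0 Z ω i
                  + Real.sqrt (postVarII σ β (n : ℝ) (mseq n) i) * W i ω - θ0 i) ^ 2)
              ≥ Mseq n * (n : ℝ) ^ (-(β / (1 + 2 * β)))}
          ≤ ENNReal.ofReal ε :=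
  adjusted_likelihood_averaging_contraction_general P Z W hZW β M σ hβ hσ Mseq hMseq mseq hmseq
end

section
/- (Variance-term asymptotics for the local-smoothing kernel, used in Theorem 1.) For every σ, β > 0 there exist constants 0 < c ≤ C and K > 0 such that for all integers m ≥ 1 and all reals n > 0 with n/m ≥ K, c·m^{-1/(1+2β)}·n^{-2β/(1+2β)} ≤ Σ_{i=1}^∞ σ²·n/(n + σ²·m·i^{1+2β})² ≤ C·m^{-1/(1+2β)}·n^{-2β/(1+2β)}. -/
/-!
Put `p = 1 + 2β` and `t = (n / (σ² m))^{1/p}`. The `i`-th term equals `(σ²/n) (1 + (i/t)^p)^{-2}`,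
and `t/n = (σ²)^{-1/p} m^{-1/p} n^{-2β/p}`, so it suffices that `Σ_{i ≥ 1} (1 + (i/t)^p)^{-2}`
lies between `t/8` and `4t` once `t ≥ 1`. The `⌊t⌋ ≥ t/2` terms with `i ≤ t` are each at least
`1/4`; and since `1 + x ≤ 2(1 + x^p)`, every term is at most `4t²/(t + i)²`, whose sum telescopes
to at most `4t`.
-/

open Real Finset

section SmoothingSeries

variable {p : ℝ}

lemma one_add_le_two_mul_one_add_rpow (hp : 1 ≤ p) {x : ℝ} (hx : 0 ≤ x) :
    1 + x ≤ 2 * (1 + x ^ p) := by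
  rcases le_total x 1 with hx1 | hx1
  · linarith [rpow_nonneg hx p]
  · linarith [self_le_rpow_of_one_le hx1 hp]

lemma inv_one_add_rpow_sq_le (hp : 1 ≤ p) {x : ℝ} (hx : 0 ≤ x) :
    ((1 + x ^ p) ^ 2)⁻¹ ≤ 4 * ((1 + x) ^ 2)⁻¹ :=
  calc ((1 + x ^ p) ^ 2)⁻¹ ≤ (((1 + x) / 2) ^ 2)⁻¹ := by
        gcongr; linarith [one_add_le_two_mul_one_add_rpow hp hx]
    _ = 4 * ((1 + x) ^ 2)⁻¹ := by rw [div_pow, inv_div]; ring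

lemma sum_range_inv_add_sq_le {t : ℝ} (ht : 0 < t) (N : ℕ) :
    ∑ i ∈ range N, ((t + (i + 1)) ^ 2)⁻¹ ≤ t⁻¹ := by
  have telescope (i : ℕ) : ((t + (i + 1)) ^ 2)⁻¹ ≤ (t + i)⁻¹ - (t + (i + 1 : ℕ))⁻¹ := by
    rw [Nat.cast_succ, inv_sub_inv (by positivity) (by positivity), add_sub_add_left_eq_sub,
      add_sub_cancel_left, one_div, sq]
    gcongr; linarith
  calc ∑ i ∈ range N, ((t + (i + 1)) ^ 2)⁻¹
      ≤ ∑ i ∈ range N, ((t + i)⁻¹ - (t + (i + 1 : ℕ))⁻¹) := sum_le_sum fun i _ => telescope i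
    _ = t⁻¹ - (t + N)⁻¹ := by rw [sum_range_sub']; simp
    _ ≤ t⁻¹ := by linarith [inv_pos.2 (by positivity : 0 < t + N)]

lemma sum_range_inv_one_add_div_rpow_sq_le (hp : 1 ≤ p) {t : ℝ} (ht : 0 < t) (N : ℕ) :
    ∑ i ∈ range N, ((1 + ((i + 1) / t) ^ p) ^ 2)⁻¹ ≤ 4 * t := by
  have rescale (i : ℕ) : ((1 + (i + 1) / t) ^ 2)⁻¹ = t ^ 2 * ((t + (i + 1)) ^ 2)⁻¹ := by
    field_simp
  calc ∑ i ∈ range N, ((1 + ((i + 1) / t) ^ p) ^ 2)⁻¹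
      ≤ ∑ i ∈ range N, 4 * (t ^ 2 * ((t + (i + 1)) ^ 2)⁻¹) :=
        sum_le_sum fun i _ => rescale i ▸ inv_one_add_rpow_sq_le hp (by positivity)
    _ ≤ 4 * (t ^ 2 * t⁻¹) := by
        rw [← mul_sum, ← mul_sum]
        gcongr
        exact sum_range_inv_add_sq_le ht N
    _ = 4 * t := by field_simp

lemma summable_inv_one_add_div_rpow_sq (hp : 1 ≤ p) {t : ℝ} (ht : 0 < t) :
    Summable fun i : ℕ => ((1 + ((i + 1) / t) ^ p) ^ 2)⁻¹ :=
  summable_of_sum_range_le (fun _ => by positivity) (sum_range_inv_one_add_div_rpow_sq_le hp ht)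

lemma tsum_inv_one_add_div_rpow_sq_le (hp : 1 ≤ p) {t : ℝ} (ht : 0 < t) :
    ∑' i : ℕ, ((1 + ((i + 1) / t) ^ p) ^ 2)⁻¹ ≤ 4 * t :=
  Real.tsum_le_of_sum_range_le (fun _ => by positivity) (sum_range_inv_one_add_div_rpow_sq_le hp ht)

lemma le_tsum_inv_one_add_div_rpow_sq (hp : 1 ≤ p) {t : ℝ} (ht : 1 ≤ t) :
    t / 8 ≤ ∑' i : ℕ, ((1 + ((i + 1) / t) ^ p) ^ 2)⁻¹ := by
  have ht0 : 0 < t := by linarith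
  have head (i : ℕ) (hi : i ∈ range ⌊t⌋₊) : (4 : ℝ)⁻¹ ≤ ((1 + ((i + 1) / t) ^ p) ^ 2)⁻¹ := by
    have hi : (i : ℝ) + 1 ≤ t := by exact_mod_cast (Nat.le_floor_iff ht0.le).1 (mem_range.1 hi)
    have : ((i + 1) / t) ^ p ≤ 1 :=
      rpow_le_one (by positivity) ((div_le_one ht0).2 hi) (by linarith)
    calc (4 : ℝ)⁻¹ = ((1 + 1) ^ 2)⁻¹ := by norm_num
      _ ≤ _ := by gcongr
  have hfloor : t / 2 ≤ ⌊t⌋₊ := by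
    have := Nat.lt_floor_add_one t
    have : (1 : ℝ) ≤ ⌊t⌋₊ := by exact_mod_cast (Nat.one_le_floor_iff t).2 ht
    linarith
  calc t / 8 ≤ ⌊t⌋₊ * (4 : ℝ)⁻¹ := by linarith
    _ ≤ ∑ i ∈ range ⌊t⌋₊, ((1 + ((i + 1) / t) ^ p) ^ 2)⁻¹ := by
        simpa using card_nsmul_le_sum _ _ _ head
    _ ≤ _ := (summable_inv_one_add_div_rpow_sq hp ht0).sum_le_tsum _ fun _ _ => by positivity

end SmoothingSeries

section Rescaling

variable {a n p : ℝ}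

lemma div_add_mul_rpow_sq_eq (ha : 0 < a) (hn : 0 < n) (hp : 0 < p) {x : ℝ} (hx : 0 ≤ x) :
    n / (n + a * x ^ p) ^ 2 = n⁻¹ * ((1 + (x / (n / a) ^ (1 / p)) ^ p) ^ 2)⁻¹ := by
  rw [div_rpow hx (by positivity), ← rpow_mul (by positivity), one_div_mul_cancel hp.ne',
    rpow_one]
  field_simp

lemma tsum_div_add_mul_rpow_sq_eq (ha : 0 < a) (hn : 0 < n) (hp : 0 < p) :
    ∑' i : ℕ, n / (n + a * ((i : ℝ) + 1) ^ p) ^ 2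
      = n⁻¹ * ∑' i : ℕ, ((1 + ((i + 1) / (n / a) ^ (1 / p)) ^ p) ^ 2)⁻¹ := by
  rw [← tsum_mul_left]
  exact tsum_congr fun i => div_add_mul_rpow_sq_eq ha hn hp (by positivity)

lemma rpow_one_div_div_self (ha : 0 < a) (hn : 0 < n) (hp : 0 < p) :
    (n / a) ^ (1 / p) / n = a ^ (-(1 / p)) * n ^ (-((p - 1) / p)) := by
  have hexp : -((p - 1) / p) = 1 / p - 1 := by field_simp; ring
  rw [div_rpow hn.le ha.le, hexp, rpow_sub_one hn.ne', rpow_neg ha.le]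
  ring

end Rescaling

/-- Variance-term asymptotics for the local-smoothing kernel (used in Theorem 1): for every
`σ, β > 0` there exist `0 < c ≤ C` and `K > 0` such that for all integers `m ≥ 1` and all
reals `n > 0` with `n/m ≥ K`,
`c m^{-1/(1+2β)} n^{-2β/(1+2β)} ≤ Σᵢ σ² n/(n + σ² m i^{1+2β})² ≤ C m^{-1/(1+2β)} n^{-2β/(1+2β)}`,
the series running over the positive integers (coordinate `i : ℕ` is the integer `i + 1`). -/
theorem variance_term_asymptotics_naive
    (σ β : ℝ) (hσ : 0 < σ) (hβ : 0 < β) :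
    ∃ c C K : ℝ, 0 < c ∧ c ≤ C ∧ 0 < K ∧
      ∀ m : ℕ, 1 ≤ m → ∀ n : ℝ, 0 < n → K ≤ n / (m : ℝ) →
        c * (m : ℝ) ^ (-(1 / (1 + 2 * β))) * n ^ (-(2 * β / (1 + 2 * β)))
            ≤ (∑' i : ℕ, σ ^ 2 * n / (n + σ ^ 2 * m * ((i : ℝ) + 1) ^ (1 + 2 * β)) ^ 2) ∧
          (∑' i : ℕ, σ ^ 2 * n / (n + σ ^ 2 * m * ((i : ℝ) + 1) ^ (1 + 2 * β)) ^ 2)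
            ≤ C * (m : ℝ) ^ (-(1 / (1 + 2 * β))) * n ^ (-(2 * β / (1 + 2 * β))) := by
  have hp : 1 ≤ 1 + 2 * β := by linarith
  have hσ2 : 0 < σ ^ 2 := by positivity
  set κ := σ ^ 2 * (σ ^ 2) ^ (-(1 / (1 + 2 * β)))
  have hκ0 : 0 < κ := by positivity
  refine ⟨κ / 8, 4 * κ, σ ^ 2, by positivity, by linarith, hσ2, fun m hm n hn hK => ?_⟩
  have hm0 : (0 : ℝ) < m := by exact_mod_cast hm
  have ha : 0 < σ ^ 2 * m := by positivity
  have han : σ ^ 2 * m ≤ n := (le_div_iff₀ hm0).1 hK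
  set t := (n / (σ ^ 2 * m)) ^ (1 / (1 + 2 * β)) with ht
  have ht1 : 1 ≤ t := one_le_rpow ((one_le_div ha).2 han) (by positivity)
  have hrate : κ * m ^ (-(1 / (1 + 2 * β))) * n ^ (-(2 * β / (1 + 2 * β)))
      = σ ^ 2 * (t / n) := by
    rw [ht, rpow_one_div_div_self ha hn (by linarith), mul_rpow hσ2.le hm0.le,
      show 1 + 2 * β - 1 = 2 * β by ring]
    ring
  have hsum : ∑' i : ℕ, σ ^ 2 * n / (n + σ ^ 2 * m * ((i : ℝ) + 1) ^ (1 + 2 * β)) ^ 2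
      = σ ^ 2 * n⁻¹ * ∑' i : ℕ, ((1 + ((i + 1) / t) ^ (1 + 2 * β)) ^ 2)⁻¹ := by
    simp_rw [mul_div_assoc]
    rw [tsum_mul_left, tsum_div_add_mul_rpow_sq_eq ha hn (by linarith), mul_assoc]
  rw [hsum]
  constructor
  · calc κ / 8 * m ^ (-(1 / (1 + 2 * β))) * n ^ (-(2 * β / (1 + 2 * β)))
        = σ ^ 2 * n⁻¹ * (t / 8) := by linear_combination hrate / 8
      _ ≤ _ := by gcongr; exact le_tsum_inv_one_add_div_rpow_sq hp ht1
  · calc σ ^ 2 * n⁻¹ * ∑' i : ℕ, ((1 + ((i + 1) / t) ^ (1 + 2 * β)) ^ 2)⁻¹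
        ≤ σ ^ 2 * n⁻¹ * (4 * t) := by
          gcongr; exact tsum_inv_one_add_div_rpow_sq_le hp (by linarith)
      _ = 4 * κ * m ^ (-(1 / (1 + 2 * β))) * n ^ (-(2 * β / (1 + 2 * β))) := by
          linear_combination -4 * hrate
end

section
/- (Posterior-spread asymptotics for the naive averaging method, used in Theorem 1.) For every σ, β > 0 there exist constants 0 < c ≤ C and K > 0 such that for all integers m ≥ 1 and all reals n > 0 with n/m ≥ K, c·m^{-1/(1+2β)}·n^{-2β/(1+2β)} ≤ Σ_{i=1}^∞ σ²/(n + σ²·m·i^{1+2β}) ≤ C·m^{-1/(1+2β)}·n^{-2β/(1+2β)}. -/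
/-!
Put `x = n / (σ² m)`, `γ = 1 + 2β` and `T = x ^ (1/γ)`, so that the series is
`m⁻¹ ∑ₖ (T^γ + k^γ)⁻¹` and the hypothesis `n / m ≥ σ²` says `T ≥ 1`. The `⌊T⌋ ≥ T / 2` terms
with `k ≤ T` lie between `(2 T^γ)⁻¹` and `T^{-γ}`, so they contribute `≍ T^{1-γ}`; the tail
`k > ⌊T⌋` is at most `∑_{k > ⌊T⌋} k^{-γ} ≤ ⌊T⌋^{1-γ} / (γ - 1)` by comparison with `∫ x^{-γ} dx`,
again `O(T^{1-γ})`. Finally `m⁻¹ T^{1-γ} = (σ²)^{2β/γ} m^{-1/γ} n^{-2β/γ}`.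
-/

open Finset Real

lemma sum_range_rpow_neg_le {x₀ p : ℝ} (hx₀ : 0 < x₀) (hp : 1 < p) (M : ℕ) :
    ∑ i ∈ range M, (x₀ + ↑(i + 1)) ^ (-p) ≤ x₀ ^ (1 - p) / (p - 1) := by
  have hanti : AntitoneOn (fun x : ℝ => x ^ (-p)) (Set.Icc x₀ (x₀ + M)) :=
    fun x hx y _ hxy => rpow_le_rpow_of_nonpos (hx₀.trans_le hx.1) hxy (by linarith)
  have hzero : (0 : ℝ) ∉ Set.uIcc x₀ (x₀ + M) := by
    rw [Set.uIcc_of_le (by simp)]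
    exact fun h => hx₀.not_ge h.1
  calc ∑ i ∈ range M, (x₀ + ↑(i + 1)) ^ (-p) ≤ ∫ x in x₀..x₀ + M, x ^ (-p) :=
        hanti.sum_le_integral
    _ = (x₀ ^ (1 - p) - (x₀ + M) ^ (1 - p)) / (p - 1) := by
        rw [integral_rpow (Or.inr ⟨by linarith, hzero⟩), neg_add_eq_sub, ← neg_sub p 1,
          div_neg, ← neg_div, neg_sub]
    _ ≤ x₀ ^ (1 - p) / (p - 1) := by
        gcongr
        exact sub_le_self _ (by positivity)

section

variable {p T : ℝ}

lemma summable_inv_rpow_add_rpow (hp : 1 < p) (hT : 0 ≤ T) :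
    Summable fun k : ℕ => (T ^ p + ((k : ℝ) + 1) ^ p)⁻¹ := by
  have hmaj : Summable fun k : ℕ => (((k : ℝ) + 1) ^ p)⁻¹ := by
    simpa using (summable_nat_add_iff 1).mpr (Real.summable_nat_rpow_inv.mpr hp)
  refine hmaj.of_nonneg_of_le (fun k => by positivity) fun k => ?_
  gcongr
  exact le_add_of_nonneg_left (by positivity)

lemma le_tsum_inv_rpow_add_rpow (hp : 1 < p) (hT : 1 ≤ T) :
    T ^ (1 - p) / 4 ≤ ∑' k : ℕ, (T ^ p + ((k : ℝ) + 1) ^ p)⁻¹ := by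
  have hTp : 0 < T ^ p := by positivity
  have hhead : ∀ k ∈ range ⌊T⌋₊, (2 * T ^ p)⁻¹ ≤ (T ^ p + ((k : ℝ) + 1) ^ p)⁻¹ := by
    intro k hk
    have hkT : (k : ℝ) + 1 ≤ T := by
      exact_mod_cast (Nat.cast_le.mpr (mem_range.mp hk)).trans (Nat.floor_le (by linarith))
    have : ((k : ℝ) + 1) ^ p ≤ T ^ p := by gcongr
    gcongr
    linarith
  calc T ^ (1 - p) / 4 = T / 2 * (2 * T ^ p)⁻¹ := by
        rw [rpow_sub (by linarith), rpow_one]; field_simp; ring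
    _ ≤ ⌊T⌋₊ * (2 * T ^ p)⁻¹ := by gcongr; exact (Nat.div_two_lt_floor hT).le
    _ ≤ ∑ k ∈ range ⌊T⌋₊, (T ^ p + ((k : ℝ) + 1) ^ p)⁻¹ := by
        simpa using card_nsmul_le_sum _ _ _ hhead
    _ ≤ ∑' k : ℕ, (T ^ p + ((k : ℝ) + 1) ^ p)⁻¹ :=
        (summable_inv_rpow_add_rpow hp (by linarith)).sum_le_tsum _ fun k _ => by positivity

lemma tsum_inv_rpow_add_rpow_le (hp : 1 < p) (hT : 1 ≤ T) :
    ∑' k : ℕ, (T ^ p + ((k : ℝ) + 1) ^ p)⁻¹ ≤ (1 + 2 ^ (p - 1) / (p - 1)) * T ^ (1 - p) := by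
  set N := ⌊T⌋₊
  have hTp : 0 < T ^ p := by positivity
  have hNT : (N : ℝ) ≤ T := Nat.floor_le (by linarith)
  have hN2 : T / 2 ≤ N := (Nat.div_two_lt_floor hT).le
  have hN : 0 < (N : ℝ) := by linarith
  have hhead : ∑ k ∈ range N, (T ^ p + ((k : ℝ) + 1) ^ p)⁻¹ ≤ N * (T ^ p)⁻¹ := by
    simpa using sum_le_card_nsmul (range N) _ (T ^ p)⁻¹ fun k _ => by
      gcongr; exact le_add_of_nonneg_right (by positivity)
  have htail : ∑' k : ℕ, (T ^ p + ((↑(k + N) : ℝ) + 1) ^ p)⁻¹ ≤ N ^ (1 - p) / (p - 1) := by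
    refine Real.tsum_le_of_sum_range_le (fun k => by positivity) fun M =>
      le_trans (sum_le_sum fun k _ => ?_) (sum_range_rpow_neg_le hN hp M)
    rw [rpow_neg (by positivity), show ((↑(k + N) : ℝ) + 1) = N + ↑(k + 1) by push_cast; ring]
    gcongr
    exact le_add_of_nonneg_left (by positivity)
  have hNp : (N : ℝ) ^ (1 - p) ≤ 2 ^ (p - 1) * T ^ (1 - p) := by
    calc (N : ℝ) ^ (1 - p) ≤ (T / 2) ^ (1 - p) :=
          rpow_le_rpow_of_nonpos (by positivity) hN2 (by linarith)
      _ = 2 ^ (p - 1) * T ^ (1 - p) := by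
          rw [div_rpow (by linarith) zero_le_two, ← neg_sub p 1, rpow_neg zero_le_two]
          field_simp
  have hscale : T * (T ^ p)⁻¹ = T ^ (1 - p) := by
    rw [rpow_sub (by linarith), rpow_one, div_eq_mul_inv]
  calc ∑' k : ℕ, (T ^ p + ((k : ℝ) + 1) ^ p)⁻¹
      = ∑ k ∈ range N, (T ^ p + ((k : ℝ) + 1) ^ p)⁻¹
          + ∑' k : ℕ, (T ^ p + ((↑(k + N) : ℝ) + 1) ^ p)⁻¹ :=
        ((summable_inv_rpow_add_rpow hp (by linarith)).sum_add_tsum_nat_add N).symm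
    _ ≤ N * (T ^ p)⁻¹ + N ^ (1 - p) / (p - 1) := add_le_add hhead htail
    _ ≤ T * (T ^ p)⁻¹ + 2 ^ (p - 1) * T ^ (1 - p) / (p - 1) := by
        gcongr
    _ = (1 + 2 ^ (p - 1) / (p - 1)) * T ^ (1 - p) := by rw [hscale]; ring

end

/-- Posterior-spread asymptotics for the naive averaging method (used in Theorem 1): for
every `σ, β > 0` there exist `0 < c ≤ C` and `K > 0` such that for all integers `m ≥ 1` and
all reals `n > 0` with `n/m ≥ K`,
`c m^{-1/(1+2β)} n^{-2β/(1+2β)} ≤ Σᵢ σ²/(n + σ² m i^{1+2β}) ≤ C m^{-1/(1+2β)} n^{-2β/(1+2β)}`,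
the series running over the positive integers (coordinate `i : ℕ` is the integer `i + 1`). -/
theorem spread_asymptotics_naive
    (σ β : ℝ) (hσ : 0 < σ) (hβ : 0 < β) :
    ∃ c C K : ℝ, 0 < c ∧ c ≤ C ∧ 0 < K ∧
      ∀ m : ℕ, 1 ≤ m → ∀ n : ℝ, 0 < n → K ≤ n / (m : ℝ) →
        c * (m : ℝ) ^ (-(1 / (1 + 2 * β))) * n ^ (-(2 * β / (1 + 2 * β)))
            ≤ (∑' i : ℕ, σ ^ 2 / (n + σ ^ 2 * m * ((i : ℝ) + 1) ^ (1 + 2 * β))) ∧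
          (∑' i : ℕ, σ ^ 2 / (n + σ ^ 2 * m * ((i : ℝ) + 1) ^ (1 + 2 * β)))
            ≤ C * (m : ℝ) ^ (-(1 / (1 + 2 * β))) * n ^ (-(2 * β / (1 + 2 * β))) := by
  set γ := 1 + 2 * β
  have hγ : 1 < γ := by linarith
  set C₀ := 1 + 2 ^ (γ - 1) / (γ - 1)
  have hC₀ : 1 ≤ C₀ := le_add_of_nonneg_right (div_nonneg (by positivity) (by linarith))
  have hσβ : 0 < (σ ^ 2) ^ (2 * β / γ) := by positivity
  refine ⟨(σ ^ 2) ^ (2 * β / γ) / 4, (σ ^ 2) ^ (2 * β / γ) * C₀, σ ^ 2, by positivity,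
    by nlinarith, by positivity, fun m hm n hn hK => ?_⟩
  have hm0 : (0 : ℝ) < m := by exact_mod_cast hm
  set x := n / (σ ^ 2 * m)
  have hx : 1 ≤ x := by
    rw [le_div_iff₀ hm0] at hK
    rw [le_div_iff₀ (by positivity)]
    linarith
  set T := x ^ γ⁻¹
  have hT : 1 ≤ T := one_le_rpow hx (by positivity)
  have hTγ : T ^ γ = x := rpow_inv_rpow (by positivity) (by positivity)
  have hsum : ∑' k : ℕ, σ ^ 2 / (n + σ ^ 2 * m * ((k : ℝ) + 1) ^ γ)
      = (m : ℝ)⁻¹ * ∑' k : ℕ, (T ^ γ + ((k : ℝ) + 1) ^ γ)⁻¹ := by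
    rw [← tsum_mul_left, hTγ]
    congr 1 with k
    simp only [x]
    field_simp
  have hscale : (m : ℝ)⁻¹ * T ^ (1 - γ)
      = (σ ^ 2) ^ (2 * β / γ) * m ^ (-(1 / γ)) * n ^ (-(2 * β / γ)) := by
    rw [show -(1 / γ) = 2 * β / γ - 1 by field_simp; ring, rpow_sub_one hm0.ne',
      ← rpow_mul (by positivity), show γ⁻¹ * (1 - γ) = -(2 * β / γ) by field_simp; ring,
      rpow_neg (by positivity), rpow_neg hn.le, div_rpow hn.le (by positivity),
      mul_rpow (by positivity) hm0.le]
    field_simp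
  rw [hsum]
  constructor
  · calc _ = (m : ℝ)⁻¹ * (T ^ (1 - γ) / 4) := by linear_combination -hscale / 4
      _ ≤ _ := by gcongr; exact le_tsum_inv_rpow_add_rpow hγ hT
  · calc _ ≤ (m : ℝ)⁻¹ * (C₀ * T ^ (1 - γ)) := by
          gcongr; exact tsum_inv_rpow_add_rpow_le hγ hT
      _ = _ := by linear_combination C₀ * hscale
end

section
/- (Squared bias for the least-favorable signal, used in Theorem 1.) For every σ, β, M > 0 there exist constants 0 < c ≤ C and K > 0 such that for all integers m ≥ 1 and all reals n > 0 with n/m ≥ K, c·M²·(n/m)^{-2β/(1+2β)} ≤ Σ_{i=1}^∞ σ⁴·m²·i^{2+4β}·θ₀,ᵢ²/(n + σ²·m·i^{1+2β})² ≤ C·M²·(n/m)^{-2β/(1+2β)}, where θ₀,ᵢ² = M²·i^{-1-2β}. -/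
open Real Finset

/-! With `p = 1 + 2β` and `r = n / (σ² m)` the `i`-th term of the series is
`M² i^p / (r + i^p)²`; put `x = r^(1/p)`, so that `x / r = x^(1-p) = r^(-2β/(1+2β))`.
The at most `x` terms with `i ≤ x` are each `≤ M² / r`, and the terms with `i > x` are
`≤ M² i^(-p)`, whose sum is `≤ M² ⌊x⌋^(1-p) / (p - 1)` by comparison with `∫ t^(-p) dt`.
Conversely, the more than `x` terms with `x < i ≤ 3x` are each `≥ M² / (4 · 3^p r)`.
Rescaling `r` back to `n / m` only costs a power of `σ²`. -/

lemma tsum_le_of_le_rpow_neg {f : ℕ → ℝ} {p a : ℝ} (hp : 1 < p) (ha : 0 < a)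
    (hf₀ : ∀ i, 0 ≤ f i) (hf : ∀ i, f i ≤ (a + (i + 1 : ℕ)) ^ (-p)) :
    ∑' i, f i ≤ a ^ (1 - p) / (p - 1) := by
  refine Real.tsum_le_of_sum_range_le hf₀ fun n ↦ ?_
  have hanti : AntitoneOn (fun x : ℝ ↦ x ^ (-p)) (Set.Icc a (a + n)) :=
    (antitoneOn_rpow_Ioi_of_exponent_nonpos (by linarith)).mono
      fun x hx ↦ ha.trans_le hx.1
  have hzero : (0 : ℝ) ∉ Set.uIcc a (a + n) := by
    rw [Set.uIcc_of_le (by simp)]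
    exact fun h ↦ ha.not_ge h.1
  calc ∑ i ∈ range n, f i
      ≤ ∑ i ∈ range n, (a + (i + 1 : ℕ)) ^ (-p) := sum_le_sum fun i _ ↦ hf i
    _ ≤ ∫ x in a..a + n, x ^ (-p) := hanti.sum_le_integral
    _ = (a ^ (1 - p) - (a + n) ^ (1 - p)) / (p - 1) := by
      rw [integral_rpow (Or.inr ⟨by linarith, hzero⟩), show -p + 1 = -(p - 1) by ring,
        div_neg, ← neg_div]
      ring_nf
    _ ≤ a ^ (1 - p) / (p - 1) := by
      gcongr
      exact sub_le_self _ (by positivity)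

lemma div_add_sq_le_inv {r y : ℝ} (hr : 0 ≤ r) (hy : 0 < y) : y / (r + y) ^ 2 ≤ y⁻¹ := by
  rw [div_le_iff₀ (by positivity), inv_mul_eq_div, le_div_iff₀ hy]
  nlinarith

lemma div_add_sq_le_inv_of_le {r y : ℝ} (hy : 0 ≤ y) (hyr : y ≤ r) (hr : 0 < r) :
    y / (r + y) ^ 2 ≤ r⁻¹ := by
  rw [div_le_iff₀ (by positivity), inv_mul_eq_div, le_div_iff₀ hr]
  nlinarith

lemma inv_four_mul_le_div_add_sq {r y : ℝ} (hr : 0 < r) (hry : r ≤ y) :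
    (4 * y)⁻¹ ≤ y / (r + y) ^ 2 := by
  have hy : 0 < y := hr.trans_le hry
  rw [le_div_iff₀ (by positivity), inv_mul_eq_div, div_le_iff₀ (by positivity)]
  nlinarith

noncomputable def biasProfile (p r : ℝ) : ℝ :=
  ∑' i : ℕ, ((i : ℝ) + 1) ^ p / (r + ((i : ℝ) + 1) ^ p) ^ 2

section biasProfile

variable {p : ℝ}

lemma summable_biasProfile (hp : 1 < p) {r : ℝ} (hr : 0 ≤ r) :
    Summable fun i : ℕ ↦ ((i : ℝ) + 1) ^ p / (r + ((i : ℝ) + 1) ^ p) ^ 2 := by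
  have hpseries : Summable fun i : ℕ ↦ ((i : ℝ) + 1) ^ (-p) := by
    simpa using (summable_nat_add_iff 1).mpr (Real.summable_nat_rpow.mpr (neg_lt_neg hp))
  refine hpseries.of_nonneg_of_le (fun _ ↦ by positivity) fun i ↦ ?_
  rw [rpow_neg (by positivity)]
  exact div_add_sq_le_inv hr (by positivity)

lemma biasProfile_rpow_le (hp : 1 < p) {x : ℝ} (hx : 1 ≤ x) :
    biasProfile p (x ^ p) ≤ (1 + 2 ^ (p - 1) / (p - 1)) * x ^ (1 - p) := by
  set N := ⌊x⌋₊
  have hN : 1 ≤ N := Nat.one_le_floor_iff _ |>.mpr hx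
  have hNx : (N : ℝ) ≤ x := Nat.floor_le (by linarith)
  have hxN : x ≤ 2 * N := by
    have : (1 : ℝ) ≤ N := by exact_mod_cast hN
    linarith [Nat.lt_floor_add_one x]
  have hxp : 0 < x ^ p := by positivity
  rw [biasProfile, ← (summable_biasProfile hp hxp.le).sum_add_tsum_nat_add N, add_mul, one_mul]
  refine add_le_add ?_ ?_
  · calc ∑ i ∈ range N, ((i : ℝ) + 1) ^ p / (x ^ p + ((i : ℝ) + 1) ^ p) ^ 2
        ≤ ∑ i ∈ range N, (x ^ p)⁻¹ := by
          refine sum_le_sum fun i hi ↦ div_add_sq_le_inv_of_le (by positivity) ?_ hxp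
          have : (i : ℝ) + 1 ≤ N := by exact_mod_cast mem_range.mp hi
          exact rpow_le_rpow (by positivity) (this.trans hNx) (by linarith)
      _ ≤ x * (x ^ p)⁻¹ := by
          rw [sum_const, card_range, nsmul_eq_mul]
          gcongr
      _ = x ^ (1 - p) := by rw [rpow_sub (by linarith), rpow_one, div_eq_mul_inv]
  · calc ∑' i : ℕ, (((i + N : ℕ) : ℝ) + 1) ^ p
          / (x ^ p + (((i + N : ℕ) : ℝ) + 1) ^ p) ^ 2
        ≤ (N : ℝ) ^ (1 - p) / (p - 1) := by
          refine tsum_le_of_le_rpow_neg hp (by positivity) (fun _ ↦ by positivity) fun i ↦ ?_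
          rw [show (N : ℝ) + (i + 1 : ℕ) = ((i + N : ℕ) : ℝ) + 1 by push_cast; ring,
            rpow_neg (by positivity)]
          exact div_add_sq_le_inv hxp.le (by positivity)
      _ ≤ (x / 2) ^ (1 - p) / (p - 1) := by
          gcongr ?_ / _
          exact rpow_le_rpow_of_nonpos (by positivity) (by linarith) (by linarith)
      _ = 2 ^ (p - 1) / (p - 1) * x ^ (1 - p) := by
          rw [div_rpow (by linarith) zero_le_two, div_eq_mul_inv (x ^ (1 - p)),
            ← rpow_neg zero_le_two, neg_sub]
          ring

lemma le_biasProfile_rpow (hp : 1 < p) {x : ℝ} (hx : 1 ≤ x) :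
    (4 * 3 ^ p)⁻¹ * x ^ (1 - p) ≤ biasProfile p (x ^ p) := by
  set N := ⌊x⌋₊
  have hNx : (N : ℝ) ≤ x := Nat.floor_le (by linarith)
  have hxN : x < N + 1 := Nat.lt_floor_add_one x
  have hxp : 0 < x ^ p := by positivity
  calc (4 * 3 ^ p)⁻¹ * x ^ (1 - p) = x * (4 * (3 * x) ^ p)⁻¹ := by
        rw [rpow_sub (by linarith), rpow_one, mul_rpow (by norm_num) (by linarith)]
        field_simp
    _ ≤ ((N + 1 : ℕ) : ℝ) * (4 * (3 * x) ^ p)⁻¹ := by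
        gcongr
        push_cast
        exact hxN.le
    _ = ∑ i ∈ Ico N (2 * N + 1), (4 * (3 * x) ^ p)⁻¹ := by
        rw [sum_const, Nat.card_Ico, nsmul_eq_mul]
        congr 2
        omega
    _ ≤ ∑ i ∈ Ico N (2 * N + 1), ((i : ℝ) + 1) ^ p / (x ^ p + ((i : ℝ) + 1) ^ p) ^ 2 := by
        refine sum_le_sum fun i hi ↦ ?_
        obtain ⟨hNi, hiN⟩ := mem_Ico.mp hi
        have hNi : (N : ℝ) ≤ i := by exact_mod_cast hNi
        have hiN : (i : ℝ) + 1 ≤ 2 * N + 1 := by exact_mod_cast hiN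
        calc (4 * (3 * x) ^ p)⁻¹ ≤ (4 * ((i : ℝ) + 1) ^ p)⁻¹ := by
              gcongr
              linarith
          _ ≤ _ := inv_four_mul_le_div_add_sq hxp
              (rpow_le_rpow (by linarith) (by linarith) (by linarith))
    _ ≤ biasProfile p (x ^ p) :=
        (summable_biasProfile hp hxp.le).sum_le_tsum _ fun _ _ ↦ by positivity

lemma biasProfile_bounds (hp : 1 < p) {r : ℝ} (hr : 1 ≤ r) :
    (4 * 3 ^ p)⁻¹ * r ^ (p⁻¹ - 1) ≤ biasProfile p r ∧
      biasProfile p r ≤ (1 + 2 ^ (p - 1) / (p - 1)) * r ^ (p⁻¹ - 1) := by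
  have hx : 1 ≤ r ^ p⁻¹ := one_le_rpow hr (by positivity)
  have hxr : (r ^ p⁻¹) ^ p = r := rpow_inv_rpow (by linarith) (by positivity)
  have hxe : (r ^ p⁻¹) ^ (1 - p) = r ^ (p⁻¹ - 1) := by
    rw [← rpow_mul (by linarith)]
    congr 1
    field_simp
  simpa only [hxr, hxe] using And.intro (le_biasProfile_rpow hp hx) (biasProfile_rpow_le hp hx)

end biasProfile

lemma tsum_bias_sq_eq_mul_biasProfile (β M σ m n : ℝ) (hσm : σ ^ 2 * m ≠ 0) :
    ∑' i : ℕ, σ ^ 4 * m ^ 2 * ((i : ℝ) + 1) ^ (2 + 4 * β)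
        * (M ^ 2 * ((i : ℝ) + 1) ^ (-1 - 2 * β))
        / (n + σ ^ 2 * m * ((i : ℝ) + 1) ^ (1 + 2 * β)) ^ 2
      = M ^ 2 * biasProfile (1 + 2 * β) (n / (σ ^ 2 * m)) := by
  rw [biasProfile, ← tsum_mul_left]
  refine tsum_congr fun i ↦ ?_
  have hk : (0 : ℝ) < i + 1 := by positivity
  have hexp : ((i : ℝ) + 1) ^ (2 + 4 * β) * ((i : ℝ) + 1) ^ (-1 - 2 * β)
      = ((i : ℝ) + 1) ^ (1 + 2 * β) := by
    rw [← rpow_add hk]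
    ring_nf
  rw [div_add' _ _ _ hσm, div_pow, div_div_eq_mul_div]
  calc _ = M ^ 2 * (σ ^ 2 * m) ^ 2
        * (((i : ℝ) + 1) ^ (2 + 4 * β) * ((i : ℝ) + 1) ^ (-1 - 2 * β))
        / (n + σ ^ 2 * m * ((i : ℝ) + 1) ^ (1 + 2 * β)) ^ 2 := by ring
    _ = _ := by rw [hexp]; ring

theorem squared_bias_least_favorable_naive_general
    (σ β M : ℝ) (hσ : 0 < σ) (hβ : 0 < β) :
    ∃ c C K : ℝ, 0 < c ∧ c ≤ C ∧ 0 < K ∧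
      ∀ m : ℕ, 1 ≤ m → ∀ n : ℝ, 0 < n → K ≤ n / (m : ℝ) →
        c * M ^ 2 * (n / (m : ℝ)) ^ (-(2 * β / (1 + 2 * β)))
            ≤ (∑' i : ℕ, σ ^ 4 * (m : ℝ) ^ 2 * ((i : ℝ) + 1) ^ (2 + 4 * β)
                * (M ^ 2 * ((i : ℝ) + 1) ^ (-1 - 2 * β))
                / (n + σ ^ 2 * m * ((i : ℝ) + 1) ^ (1 + 2 * β)) ^ 2) ∧
          (∑' i : ℕ, σ ^ 4 * (m : ℝ) ^ 2 * ((i : ℝ) + 1) ^ (2 + 4 * β)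
                * (M ^ 2 * ((i : ℝ) + 1) ^ (-1 - 2 * β))
                / (n + σ ^ 2 * m * ((i : ℝ) + 1) ^ (1 + 2 * β)) ^ 2)
            ≤ C * M ^ 2 * (n / (m : ℝ)) ^ (-(2 * β / (1 + 2 * β))) := by
  set p := 1 + 2 * β
  have hp : 1 < p := by linarith
  have hσ2 : 0 < σ ^ 2 := by positivity
  refine ⟨(4 * 3 ^ p)⁻¹ * (σ ^ 2) ^ (1 - p⁻¹),
    (1 + 2 ^ (p - 1) / (p - 1)) * (σ ^ 2) ^ (1 - p⁻¹), σ ^ 2,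
    by positivity, ?_, hσ2, fun m hm n _ hK ↦ ?_⟩
  · have h3p : (1 : ℝ) ≤ 3 ^ p := one_le_rpow (by norm_num) (by positivity)
    have hc : (4 * 3 ^ p : ℝ)⁻¹ ≤ 1 := inv_le_one_of_one_le₀ (by linarith)
    gcongr
    exact hc.trans (le_add_of_nonneg_right (by positivity))
  have hm0 : (0 : ℝ) < m := by exact_mod_cast hm
  set r := n / (σ ^ 2 * m)
  have hr : 1 ≤ r := by
    rwa [one_le_div (by positivity), ← le_div_iff₀ hm0]
  have hscale : (σ ^ 2) ^ (1 - p⁻¹) * (n / m) ^ (-(2 * β / p)) = r ^ (p⁻¹ - 1) := by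
    rw [show -(2 * β / p) = p⁻¹ - 1 by field_simp; ring, show r = n / m / σ ^ 2 by ring,
      div_rpow (by linarith) hσ2.le, show 1 - p⁻¹ = -(p⁻¹ - 1) by ring, rpow_neg hσ2.le]
    ring
  obtain ⟨hlower, hupper⟩ := biasProfile_bounds hp hr
  rw [tsum_bias_sq_eq_mul_biasProfile β M σ m n (by positivity)]
  constructor
  · calc _ = M ^ 2 * ((4 * 3 ^ p)⁻¹ * r ^ (p⁻¹ - 1)) := by rw [← hscale]; ring
      _ ≤ _ := by gcongr
  · calc _ ≤ M ^ 2 * ((1 + 2 ^ (p - 1) / (p - 1)) * r ^ (p⁻¹ - 1)) := by gcongr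
      _ = _ := by rw [← hscale]; ring

/-- Squared bias for the least-favorable signal `θ₀,ᵢ = M i^{-(1+2β)/2}` (used in
Theorem 1): for every `σ, β, M > 0` there exist `0 < c ≤ C` and `K > 0` such that for all
integers `m ≥ 1` and all reals `n > 0` with `n/m ≥ K`,
`c M² (n/m)^{-2β/(1+2β)} ≤ Σᵢ σ⁴ m² i^{2+4β} θ₀,ᵢ²/(n + σ² m i^{1+2β})²
  ≤ C M² (n/m)^{-2β/(1+2β)}`,
the series running over the positive integers (coordinate `i : ℕ` is the integer `i + 1`). -/
theorem squared_bias_least_favorable_naive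
    (σ β M : ℝ) (hσ : 0 < σ) (hβ : 0 < β) (hM : 0 < M) :
    ∃ c C K : ℝ, 0 < c ∧ c ≤ C ∧ 0 < K ∧
      ∀ m : ℕ, 1 ≤ m → ∀ n : ℝ, 0 < n → K ≤ n / (m : ℝ) →
        c * M ^ 2 * (n / (m : ℝ)) ^ (-(2 * β / (1 + 2 * β)))
            ≤ (∑' i : ℕ, σ ^ 4 * (m : ℝ) ^ 2 * ((i : ℝ) + 1) ^ (2 + 4 * β)
                * (M ^ 2 * ((i : ℝ) + 1) ^ (-1 - 2 * β))
                / (n + σ ^ 2 * m * ((i : ℝ) + 1) ^ (1 + 2 * β)) ^ 2) ∧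
          (∑' i : ℕ, σ ^ 4 * (m : ℝ) ^ 2 * ((i : ℝ) + 1) ^ (2 + 4 * β)
                * (M ^ 2 * ((i : ℝ) + 1) ^ (-1 - 2 * β))
                / (n + σ ^ 2 * m * ((i : ℝ) + 1) ^ (1 + 2 * β)) ^ 2)
            ≤ C * M ^ 2 * (n / (m : ℝ)) ^ (-(2 * β / (1 + 2 * β))) :=
  squared_bias_least_favorable_naive_general σ β M hσ hβ
end

section
/- (Uniform squared-bias bound for the rescaled prior, used in Theorem 3.) Let α, σ > 0 and let β, M > 0 satisfy β < 1 + 2α. There exist C > 0 and K > 0 such that for all integers m ≥ 1, all reals τ > 0 and n > 0 with n·τ/m ≥ K, and all θ ∈ H^β(M), Σ_{i=1}^∞ σ⁴·(m/τ)²·i^{2+4α}·θᵢ²/(n + σ²·(m/τ)·i^{1+2α})² ≤ C·M²·(τ·n/m)^{-2β/(1+2α)}. -/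
open Finset

theorem one_add_mul_one_sub_inv_le_rpow {y r : ℝ} (hy : 0 < y) (hr : 0 ≤ r) :
    1 + r * (1 - y⁻¹) ≤ y ^ r := by
  calc 1 + r * (1 - y⁻¹) ≤ Real.log y * r + 1 := by
        nlinarith [Real.one_sub_inv_le_log_of_pos hy]
    _ ≤ y ^ r := by rw [Real.rpow_def_of_pos hy]; exact Real.add_one_le_exp _

theorem mul_rpow_neg_one_sub_le_rpow_neg_sub {y q : ℝ} (hy : 0 < y) (hq : 0 ≤ q) :
    q * (y + 1) ^ (-(1 + q)) ≤ y ^ (-q) - (y + 1) ^ (-q) := by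
  have hy1 : 0 < y + 1 := by linarith
  have key := one_add_mul_one_sub_inv_le_rpow (div_pos hy1 hy) hq
  have hinv : 1 - ((y + 1) / y)⁻¹ = 1 / (y + 1) := by field_simp; ring
  rw [hinv, Real.div_rpow hy1.le hy.le, le_div_iff₀ (Real.rpow_pos_of_pos hy _)] at key
  have hsplit : (y + 1) ^ (-(1 + q)) = (y + 1) ^ (-q) / (y + 1) := by
    rw [neg_add, Real.rpow_add hy1, Real.rpow_neg_one, div_eq_mul_inv, mul_comm]
  rw [hsplit, Real.rpow_neg hy.le, Real.rpow_neg hy1.le]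
  have hA := Real.rpow_pos_of_pos hy q
  have hB := Real.rpow_pos_of_pos hy1 q
  field_simp at key ⊢
  nlinarith

theorem mul_rpow_sub_one_le_rpow_sub_rpow {x p : ℝ} (hx : 0 ≤ x) (hp0 : 0 ≤ p) (hp1 : p ≤ 1) :
    p * (x + 1) ^ (p - 1) ≤ (x + 1) ^ p - x ^ p := by
  have hx1 : 0 < x + 1 := by linarith
  have key := rpow_one_add_le_one_add_mul_self (s := -(x + 1)⁻¹)
    (by rw [neg_le_neg_iff]; exact inv_le_one_of_one_le₀ (by linarith)) hp0 hp1
  have hbase : 1 + -(x + 1)⁻¹ = x / (x + 1) := by field_simp; ring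
  rw [hbase, Real.div_rpow hx hx1.le, div_le_iff₀ (Real.rpow_pos_of_pos hx1 _)] at key
  rw [Real.rpow_sub hx1, Real.rpow_one]
  have hrhs : (1 + p * -(x + 1)⁻¹) * (x + 1) ^ p = (x + 1) ^ p - p * ((x + 1) ^ p / (x + 1)) := by
    field_simp; ring
  linarith

theorem sum_range_add_one_rpow_le {e : ℝ} (he : -1 < e) (N : ℕ) :
    ∑ i ∈ range N, ((i : ℝ) + 1) ^ e ≤ (1 + 1 / (e + 1)) * (N : ℝ) ^ (e + 1) := by
  have hp : 0 < e + 1 := by linarith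
  have hNp : 0 ≤ (N : ℝ) ^ (e + 1) := by positivity
  have hc : 0 < 1 / (e + 1) := by positivity
  rcases le_or_gt 0 e with he0 | he0
  · calc ∑ i ∈ range N, ((i : ℝ) + 1) ^ e ≤ ∑ _i ∈ range N, (N : ℝ) ^ e := by
          gcongr with i hi
          exact_mod_cast mem_range.1 hi
      _ = (N : ℝ) ^ (e + 1) := by
          rw [sum_const, card_range, nsmul_eq_mul, Real.rpow_add_one' (by positivity) hp.ne',
            mul_comm]
      _ ≤ (1 + 1 / (e + 1)) * (N : ℝ) ^ (e + 1) := by nlinarith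
  · calc ∑ i ∈ range N, ((i : ℝ) + 1) ^ e
        ≤ ∑ i ∈ range N, ((((i + 1 : ℕ) : ℝ)) ^ (e + 1) - (i : ℝ) ^ (e + 1)) / (e + 1) := by
          gcongr with i
          rw [le_div_iff₀ hp, Nat.cast_succ]
          have := mul_rpow_sub_one_le_rpow_sub_rpow i.cast_nonneg hp.le (by linarith)
          rw [add_sub_cancel_right] at this
          linarith
      _ = (N : ℝ) ^ (e + 1) / (e + 1) := by
          rw [← sum_div, sum_range_sub (fun i : ℕ => (i : ℝ) ^ (e + 1)), Nat.cast_zero,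
            Real.zero_rpow hp.ne', sub_zero]
      _ ≤ (1 + 1 / (e + 1)) * (N : ℝ) ^ (e + 1) := by
          rw [div_eq_mul_one_div, mul_comm]; nlinarith

theorem sum_range_nat_add_rpow_neg_le {q : ℝ} (hq : 0 < q) {N : ℕ} (hN : N ≠ 0) (K : ℕ) :
    ∑ i ∈ range K, (((i + N : ℕ) : ℝ) + 1) ^ (-(1 + q)) ≤ (N : ℝ) ^ (-q) / q := by
  set g : ℕ → ℝ := fun j => ((j + N : ℕ) : ℝ) ^ (-q)
  calc ∑ i ∈ range K, (((i + N : ℕ) : ℝ) + 1) ^ (-(1 + q))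
      ≤ ∑ i ∈ range K, (g i - g (i + 1)) / q := by
        gcongr with i
        have hg : g (i + 1) = (((i + N : ℕ) : ℝ) + 1) ^ (-q) := by
          simp only [g, Nat.add_right_comm i 1 N, Nat.cast_succ]
        rw [le_div_iff₀ hq, mul_comm, hg]
        exact mul_rpow_neg_one_sub_le_rpow_neg_sub (by positivity) hq.le
    _ = (g 0 - g K) / q := by rw [← sum_div, sum_range_sub']
    _ ≤ (N : ℝ) ^ (-q) / q := by
        gcongr
        simp only [g, zero_add, sub_le_self_iff]
        positivity

theorem tsum_le_of_le_rpow_of_le_rpow_neg {f : ℕ → ℝ} {A B e q : ℝ} (he : -1 < e) (hq : 0 < q)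
    (hf0 : ∀ i, 0 ≤ f i) (hfA : ∀ i, f i ≤ A * ((i : ℝ) + 1) ^ e)
    (hfB : ∀ i, f i ≤ B * ((i : ℝ) + 1) ^ (-(1 + q))) {N : ℕ} (hN : N ≠ 0) :
    ∑' i, f i ≤ A * ((1 + 1 / (e + 1)) * (N : ℝ) ^ (e + 1)) + B * ((N : ℝ) ^ (-q) / q) := by
  have hA : 0 ≤ A := by simpa using (hf0 0).trans (hfA 0)
  have hB : 0 ≤ B := by simpa using (hf0 0).trans (hfB 0)
  have hsummable : Summable f := by
    refine .of_nonneg_of_le hf0 hfB (.mul_left B ?_)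
    simpa using (summable_nat_add_iff 1).2 (Real.summable_nat_rpow.2 (by linarith : -(1 + q) < -1))
  rw [← hsummable.sum_add_tsum_nat_add N]
  gcongr
  · calc ∑ i ∈ range N, f i ≤ ∑ i ∈ range N, A * ((i : ℝ) + 1) ^ e := sum_le_sum fun i _ => hfA i
      _ ≤ A * ((1 + 1 / (e + 1)) * (N : ℝ) ^ (e + 1)) := by
        rw [← mul_sum]; gcongr; exact sum_range_add_one_rpow_le he N
  · refine Real.tsum_le_of_sum_range_le (fun i => hf0 _) fun K => ?_
    calc ∑ i ∈ range K, f (i + N)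
        ≤ ∑ i ∈ range K, B * (((i + N : ℕ) : ℝ) + 1) ^ (-(1 + q)) :=
          sum_le_sum fun i _ => hfB (i + N)
      _ ≤ B * ((N : ℝ) ^ (-q) / q) := by
        rw [← mul_sum]; gcongr; exact sum_range_nat_add_rpow_neg_le hq hN K

theorem sq_mul_rpow_div_add_rpow_sq_le {β γ M ρ k t : ℝ} (hk : 0 < k) (hρ : 0 < ρ)
    (ht : k ^ (1 + 2 * β) * t ^ 2 ≤ M ^ 2) :
    t ^ 2 * (k ^ γ / (ρ + k ^ γ)) ^ 2 ≤ M ^ 2 / ρ ^ 2 * k ^ (2 * (γ - β) - 1) ∧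
      t ^ 2 * (k ^ γ / (ρ + k ^ γ)) ^ 2 ≤ M ^ 2 * k ^ (-(1 + 2 * β)) := by
  have hkγ := Real.rpow_pos_of_pos hk γ
  have htM : t ^ 2 ≤ M ^ 2 * k ^ (-(1 + 2 * β)) := by
    rw [Real.rpow_neg hk.le, ← div_eq_mul_inv, le_div_iff₀ (by positivity), mul_comm]
    exact ht
  constructor
  · have hexp : (k ^ γ) ^ 2 * k ^ (-(1 + 2 * β)) = k ^ (2 * (γ - β) - 1) := by
      rw [← Real.rpow_mul_natCast hk.le, ← Real.rpow_add hk]; ring_nf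
    calc t ^ 2 * (k ^ γ / (ρ + k ^ γ)) ^ 2 ≤ M ^ 2 * k ^ (-(1 + 2 * β)) * (k ^ γ / ρ) ^ 2 := by
          gcongr; linarith
      _ = M ^ 2 / ρ ^ 2 * k ^ (2 * (γ - β) - 1) := by rw [← hexp]; ring
  · calc t ^ 2 * (k ^ γ / (ρ + k ^ γ)) ^ 2 ≤ t ^ 2 * 1 ^ 2 := by
          gcongr; exact div_le_one_of_le₀ (by linarith) (by positivity)
      _ ≤ M ^ 2 * k ^ (-(1 + 2 * β)) := by simpa using htM

theorem tsum_sq_mul_rpow_div_add_rpow_sq_le {β γ M ρ : ℝ} (hβ : 0 < β) (hβγ : β < γ)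
    (hρ : 1 ≤ ρ) {θ : ℕ → ℝ} (hθ : θ ∈ hyperRect β M) :
    ∑' i : ℕ, θ i ^ 2 * (((i : ℝ) + 1) ^ γ / (ρ + ((i : ℝ) + 1) ^ γ)) ^ 2
      ≤ ((1 + 1 / (2 * (γ - β))) * 2 ^ (2 * (γ - β)) + 1 / (2 * β)) * M ^ 2
        * ρ ^ (-(2 * β / γ)) := by
  have hγ : 0 < γ := hβ.trans hβγ
  have hρ0 : 0 < ρ := by linarith
  set r := ρ ^ (1 / γ)
  have hr : 1 ≤ r := Real.one_le_rpow hρ (by positivity)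
  set N := ⌈r⌉₊
  have hrN : r ≤ N := Nat.le_ceil r
  have hNr : (N : ℝ) ≤ 2 * r := (Nat.ceil_lt_two_mul (by linarith)).le
  have hN : N ≠ 0 := by positivity
  have hterm (i : ℕ) := sq_mul_rpow_div_add_rpow_sq_le (γ := γ) (i.cast_add_one_pos) hρ0 (hθ.2 i)
  refine (tsum_le_of_le_rpow_of_le_rpow_neg (by linarith) (by linarith) (fun i => by positivity)
    (fun i => (hterm i).1) (fun i => (hterm i).2) hN).trans ?_
  rw [sub_add_cancel]
  have hNhead : (N : ℝ) ^ (2 * (γ - β)) ≤ 2 ^ (2 * (γ - β)) * (ρ ^ 2 * ρ ^ (-(2 * β / γ))) := by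
    calc (N : ℝ) ^ (2 * (γ - β)) ≤ (2 * r) ^ (2 * (γ - β)) := by gcongr
      _ = 2 ^ (2 * (γ - β)) * (ρ ^ 2 * ρ ^ (-(2 * β / γ))) := by
        rw [Real.mul_rpow zero_le_two (by positivity), ← Real.rpow_mul hρ0.le,
          ← Real.rpow_natCast, ← Real.rpow_add hρ0]
        congr 2; field_simp; push_cast; ring
  have hNtail : (N : ℝ) ^ (-(2 * β)) ≤ ρ ^ (-(2 * β / γ)) := by
    calc (N : ℝ) ^ (-(2 * β)) ≤ r ^ (-(2 * β)) :=
          Real.rpow_le_rpow_of_nonpos (by positivity) hrN (by linarith)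
      _ = ρ ^ (-(2 * β / γ)) := by rw [← Real.rpow_mul hρ0.le]; congr 1; field_simp
  have : 0 < γ - β := by linarith
  calc M ^ 2 / ρ ^ 2 * ((1 + 1 / (2 * (γ - β))) * (N : ℝ) ^ (2 * (γ - β)))
        + M ^ 2 * ((N : ℝ) ^ (-(2 * β)) / (2 * β))
      ≤ M ^ 2 / ρ ^ 2 * ((1 + 1 / (2 * (γ - β))) *
          (2 ^ (2 * (γ - β)) * (ρ ^ 2 * ρ ^ (-(2 * β / γ)))))
        + M ^ 2 * (ρ ^ (-(2 * β / γ)) / (2 * β)) := by gcongr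
    _ = _ := by field_simp

theorem uniform_squared_bias_rescaled_prior_general
    (α σ β M : ℝ) (hσ : 0 < σ) (hβ : 0 < β)
    (hβα : β < 1 + 2 * α) :
    ∃ C K : ℝ, 0 < C ∧ 0 < K ∧
      ∀ m : ℕ, 1 ≤ m → ∀ τ n : ℝ, 0 < τ → 0 < n → K ≤ n * τ / (m : ℝ) →
        ∀ θ ∈ hyperRect β M,
          (∑' i : ℕ, σ ^ 4 * ((m : ℝ) / τ) ^ 2 * ((i : ℝ) + 1) ^ (2 + 4 * α) * (θ i) ^ 2
              / (n + σ ^ 2 * ((m : ℝ) / τ) * ((i : ℝ) + 1) ^ (1 + 2 * α)) ^ 2)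
            ≤ C * M ^ 2 * (τ * n / (m : ℝ)) ^ (-(2 * β / (1 + 2 * α))) := by
  set γ := 1 + 2 * α
  have hσ2 : 0 < σ ^ 2 := by positivity
  have hγβ : 0 < γ - β := by linarith
  refine ⟨((1 + 1 / (2 * (γ - β))) * 2 ^ (2 * (γ - β)) + 1 / (2 * β)) * (σ ^ 2) ^ (2 * β / γ),
    σ ^ 2, by positivity, hσ2, ?_⟩
  intro m hm τ n hτ hn hK θ hθ
  have hm0 : (0 : ℝ) < m := by exact_mod_cast hm
  set a := σ ^ 2 * ((m : ℝ) / τ)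
  have ha : 0 < a := by positivity
  have hρ : 1 ≤ n / a := by
    rw [le_div_iff₀ ha, one_mul]
    rw [le_div_iff₀ hm0] at hK
    simp only [a, mul_div_assoc', div_le_iff₀ hτ]
    linarith
  have hterm (i : ℕ) : σ ^ 4 * ((m : ℝ) / τ) ^ 2 * ((i : ℝ) + 1) ^ (2 + 4 * α) * θ i ^ 2
        / (n + a * ((i : ℝ) + 1) ^ γ) ^ 2
      = θ i ^ 2 * (((i : ℝ) + 1) ^ γ / (n / a + ((i : ℝ) + 1) ^ γ)) ^ 2 := by
    have hexp : ((i : ℝ) + 1) ^ (2 + 4 * α) = (((i : ℝ) + 1) ^ γ) ^ 2 := by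
      rw [← Real.rpow_mul_natCast (by positivity)]; simp only [γ]; ring_nf
    rw [hexp]
    simp only [a]
    field_simp
  have hscale : τ * n / m = σ ^ 2 * (n / a) := by simp only [a]; field_simp
  rw [tsum_congr hterm, hscale, Real.mul_rpow hσ2.le (by positivity)]
  calc _ ≤ _ := tsum_sq_mul_rpow_div_add_rpow_sq_le hβ hβα hρ hθ
    _ = _ := by
      rw [Real.rpow_neg hσ2.le]
      field_simp

/-- Uniform squared-bias bound for the rescaled prior (used in Theorem 3): let `α, σ > 0`
and `β, M > 0` with `β < 1 + 2α`. There exist `C > 0` and `K > 0` such that for all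
integers `m ≥ 1`, all reals `τ > 0` and `n > 0` with `nτ/m ≥ K`, and all `θ ∈ H^β(M)`,
`Σᵢ σ⁴ (m/τ)² i^{2+4α} θᵢ²/(n + σ² (m/τ) i^{1+2α})² ≤ C M² (τ n/m)^{-2β/(1+2α)}`. -/
theorem uniform_squared_bias_rescaled_prior
    (α σ β M : ℝ) (hα : 0 < α) (hσ : 0 < σ) (hβ : 0 < β) (hM : 0 < M)
    (hβα : β < 1 + 2 * α) :
    ∃ C K : ℝ, 0 < C ∧ 0 < K ∧
      ∀ m : ℕ, 1 ≤ m → ∀ τ n : ℝ, 0 < τ → 0 < n → K ≤ n * τ / (m : ℝ) →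
        ∀ θ ∈ hyperRect β M,
          (∑' i : ℕ, σ ^ 4 * ((m : ℝ) / τ) ^ 2 * ((i : ℝ) + 1) ^ (2 + 4 * α) * (θ i) ^ 2
              / (n + σ ^ 2 * ((m : ℝ) / τ) * ((i : ℝ) + 1) ^ (1 + 2 * α)) ^ 2)
            ≤ C * M ^ 2 * (τ * n / (m : ℝ)) ^ (-(2 * β / (1 + 2 * α))) :=
  uniform_squared_bias_rescaled_prior_general α σ β M hσ hβ hβα
end

section
/- (Variance and spread asymptotics for the rescaled prior, used in Theorem 3.) For every α, σ > 0 there exist constants 0 < c ≤ C and K > 0 such that for all integers m ≥ 1 and all reals τ > 0, n > 0 with n·τ/m ≥ K, both c·(τ/m)^{1/(1+2α)}·n^{-2α/(1+2α)} ≤ Σ_{i=1}^∞ σ²·n/(n + σ²·(m/τ)·i^{1+2α})² ≤ C·(τ/m)^{1/(1+2α)}·n^{-2α/(1+2α)} and c·(τ/m)^{1/(1+2α)}·n^{-2α/(1+2α)} ≤ Σ_{i=1}^∞ σ²/(n + σ²·(m/τ)·i^{1+2α}) ≤ C·(τ/m)^{1/(1+2α)}·n^{-2α/(1+2α)}. 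-/
/-!
Put `β = 1 + 2α`, `a = σ² m / τ` and `R = (n / a)^{1/β}`, so that `a R^β = n`, and `R ≥ 1` once
`nτ/m ≥ σ²`. Both sums are of order `σ² R / n = σ^{2 - 2/β} (τ/m)^{1/β} n^{-2α/β}`. The spread terms
are at most `σ²/n`, which bounds the first `⌈R⌉` of them, and at most `σ²/(a i^β)`, whose tail
beyond `R` telescopes against `x^{1-β}/(β-1)` to `σ² R^{1-β}/(a(β-1)) = σ² R/(n(β-1))`. The
variance terms are at most the spread terms, and at least `σ²/(4n)` for the `⌊R⌋ ≥ R/2` indices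
with `a i^β ≤ n`.
-/

open Real Finset

lemma sub_one_mul_add_one_rpow_neg_le {β x : ℝ} (hβ : 1 ≤ β) (hx : 0 < x) :
    (β - 1) * (x + 1) ^ (-β) ≤ x ^ (1 - β) - (x + 1) ^ (1 - β) := by
  have hx1 : 0 < x + 1 := by linarith
  -- Bernoulli's inequality `1 + β/x ≤ (1 + 1/x)^β`, cleared of denominators
  have bernoulli : (x + β) * x ^ β ≤ x * (x + 1) ^ β := by
    have h := one_add_mul_self_le_rpow_one_add (by linarith [inv_pos.2 hx]) hβ (s := x⁻¹)
    rw [show 1 + x⁻¹ = (x + 1) / x by field_simp, div_rpow hx1.le hx.le,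
      show 1 + β * x⁻¹ = (x + β) / x by field_simp, div_le_div_iff₀ hx (by positivity)] at h
    linarith
  have key : (x + β) * (x + 1) ^ (-β) ≤ x * x ^ (-β) := by
    rw [rpow_neg hx1.le, rpow_neg hx.le, ← div_eq_mul_inv, ← div_eq_mul_inv,
      div_le_div_iff₀ (by positivity) (by positivity)]
    exact bernoulli
  rw [sub_eq_add_neg 1 β, rpow_add hx, rpow_add hx1, rpow_one, rpow_one]
  linarith

lemma summable_nat_add_rpow_neg {β c : ℝ} (hβ : 1 < β) (hc : 0 ≤ c) :
    Summable fun i : ℕ => ((i : ℝ) + c) ^ (-β) := by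
  refine ((summable_one_div_nat_add_rpow c β).2 hβ).congr fun i => ?_
  rw [abs_of_nonneg (by positivity), rpow_neg (by positivity), one_div]

lemma tsum_nat_add_rpow_neg_le {β M : ℝ} (hβ : 1 < β) (hM : 0 < M) :
    ∑' i : ℕ, ((i : ℝ) + M + 1) ^ (-β) ≤ M ^ (1 - β) / (β - 1) := by
  have hβ1 : 0 < β - 1 := by linarith
  set F : ℕ → ℝ := fun i => (M + i) ^ (1 - β) / (β - 1)
  refine tsum_le_of_sum_range_le (fun i => by positivity) fun k => ?_
  have telescope : ∀ i ∈ range k, ((i : ℝ) + M + 1) ^ (-β) ≤ F i - F (i + 1) := by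
    intro i _
    have h := sub_one_mul_add_one_rpow_neg_le hβ.le (by positivity : 0 < M + i)
    simp only [F, Nat.cast_succ, div_sub_div_same, le_div_iff₀ hβ1]
    rw [← add_assoc, add_comm (i : ℝ) M]
    linarith
  calc ∑ i ∈ range k, ((i : ℝ) + M + 1) ^ (-β)
      ≤ ∑ i ∈ range k, (F i - F (i + 1)) := sum_le_sum telescope
    _ = F 0 - F k := sum_range_sub' F k
    _ ≤ F 0 := sub_le_self _ (by positivity)
    _ = M ^ (1 - β) / (β - 1) := by simp [F]

lemma div_add_mul_rpow_le {c n a x β : ℝ} (hc : 0 ≤ c) (hn : 0 ≤ n) (ha : 0 < a) (hx : 0 < x) :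
    c / (n + a * x ^ β) ≤ c / a * x ^ (-β) := by
  rw [rpow_neg hx.le, ← div_eq_mul_inv, div_div]
  gcongr
  linarith

lemma mul_div_sq_le_div {c n d : ℝ} (hc : 0 ≤ c) (hn : 0 ≤ n) (hnd : n ≤ d) :
    c * n / d ^ 2 ≤ c / d := by
  rcases hn.eq_or_lt with rfl | hn
  · simp only [mul_zero, zero_div]; positivity
  have hd : 0 < d := hn.trans_le hnd
  rw [div_le_div_iff₀ (by positivity) hd]
  nlinarith [mul_le_mul_of_nonneg_left hnd (mul_nonneg hc hd.le)]

section
variable {σ β n a : ℝ}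

lemma summable_spread (hβ : 1 < β) (hn : 0 ≤ n) (ha : 0 < a) :
    Summable fun i : ℕ => σ ^ 2 / (n + a * ((i : ℝ) + 1) ^ β) :=
  .of_nonneg_of_le (fun i => by positivity)
    (fun i => div_add_mul_rpow_le (sq_nonneg σ) hn ha (by positivity))
    ((summable_nat_add_rpow_neg hβ zero_le_one).mul_left _)

lemma variance_le_spread (hn : 0 ≤ n) (ha : 0 < a) (i : ℕ) :
    σ ^ 2 * n / (n + a * ((i : ℝ) + 1) ^ β) ^ 2 ≤ σ ^ 2 / (n + a * ((i : ℝ) + 1) ^ β) :=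
  mul_div_sq_le_div (sq_nonneg σ) hn (le_add_of_nonneg_right (by positivity))

lemma summable_variance (hβ : 1 < β) (hn : 0 ≤ n) (ha : 0 < a) :
    Summable fun i : ℕ => σ ^ 2 * n / (n + a * ((i : ℝ) + 1) ^ β) ^ 2 :=
  .of_nonneg_of_le (fun i => by positivity) (variance_le_spread hn ha)
    (summable_spread hβ hn ha)

lemma tsum_variance_le_tsum_spread (hβ : 1 < β) (hn : 0 ≤ n) (ha : 0 < a) :
    ∑' i : ℕ, σ ^ 2 * n / (n + a * ((i : ℝ) + 1) ^ β) ^ 2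
      ≤ ∑' i : ℕ, σ ^ 2 / (n + a * ((i : ℝ) + 1) ^ β) :=
  (summable_variance hβ hn ha).tsum_le_tsum (variance_le_spread hn ha)
    (summable_spread hβ hn ha)

lemma mul_rpow_le_of_le_div_rpow_inv (hβ : 0 < β) (hn : 0 ≤ n) (ha : 0 < a) {x : ℝ}
    (hx : 0 ≤ x) (hxR : x ≤ (n / a) ^ β⁻¹) : a * x ^ β ≤ n := by
  rw [le_rpow_inv_iff_of_pos hx (by positivity) hβ, le_div_iff₀ ha] at hxR
  linarith

lemma le_tsum_variance (hβ : 1 < β) (ha : 0 < a) (han : a ≤ n) :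
    σ ^ 2 / n * (n / a) ^ β⁻¹ / 8
      ≤ ∑' i : ℕ, σ ^ 2 * n / (n + a * ((i : ℝ) + 1) ^ β) ^ 2 := by
  have hn : 0 < n := ha.trans_le han
  set R := (n / a) ^ β⁻¹
  have hR : 1 ≤ R := one_le_rpow ((one_le_div ha).2 han) (by positivity)
  set N := ⌊R⌋₊
  have hN : R / 2 ≤ N := by
    have h1 : (1 : ℝ) ≤ N := by exact_mod_cast Nat.le_floor (by exact_mod_cast hR)
    linarith [Nat.lt_floor_add_one R]
  have head : ∀ i ∈ range N, σ ^ 2 / (4 * n) ≤ σ ^ 2 * n / (n + a * ((i : ℝ) + 1) ^ β) ^ 2 := by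
    intro i hi
    have hiR : (i : ℝ) + 1 ≤ R :=
      le_trans (by exact_mod_cast mem_range.1 hi) (Nat.floor_le (by positivity))
    have hle := mul_rpow_le_of_le_div_rpow_inv (by linarith) hn.le ha (by positivity) hiR
    calc σ ^ 2 / (4 * n) = σ ^ 2 * n / (2 * n) ^ 2 := by field_simp; ring
      _ ≤ σ ^ 2 * n / (n + a * ((i : ℝ) + 1) ^ β) ^ 2 := by gcongr; linarith
  calc σ ^ 2 / n * R / 8 = σ ^ 2 / (4 * n) * (R / 2) := by field_simp; ring
    _ ≤ σ ^ 2 / (4 * n) * N := by gcongr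
    _ = ∑ _i ∈ range N, σ ^ 2 / (4 * n) := by rw [sum_const, card_range, nsmul_eq_mul, mul_comm]
    _ ≤ ∑ i ∈ range N, σ ^ 2 * n / (n + a * ((i : ℝ) + 1) ^ β) ^ 2 := sum_le_sum head
    _ ≤ _ := (summable_variance hβ hn.le ha).sum_le_tsum _ fun i _ => by positivity

lemma tsum_spread_nat_add_le (hβ : 1 < β) (hn : 0 ≤ n) (ha : 0 < a) {M : ℕ} (hM : 0 < M) :
    ∑' i : ℕ, σ ^ 2 / (n + a * (((i + M : ℕ) : ℝ) + 1) ^ β)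
      ≤ σ ^ 2 / a * ((M : ℝ) ^ (1 - β) / (β - 1)) := by
  have hbound : ∀ i : ℕ, σ ^ 2 / (n + a * (((i + M : ℕ) : ℝ) + 1) ^ β)
      ≤ σ ^ 2 / a * ((i : ℝ) + M + 1) ^ (-β) := fun i => by
    push_cast
    exact div_add_mul_rpow_le (sq_nonneg σ) hn ha (by positivity)
  have hsummable : Summable fun i : ℕ => ((i : ℝ) + M + 1) ^ (-β) := by
    simpa only [add_assoc] using summable_nat_add_rpow_neg hβ (by positivity : (0 : ℝ) ≤ M + 1)
  calc ∑' i : ℕ, σ ^ 2 / (n + a * (((i + M : ℕ) : ℝ) + 1) ^ β)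
      ≤ ∑' i : ℕ, σ ^ 2 / a * ((i : ℝ) + M + 1) ^ (-β) :=
        ((summable_nat_add_iff M).2 (summable_spread hβ hn ha)).tsum_le_tsum hbound
          (hsummable.mul_left _)
    _ = σ ^ 2 / a * ∑' i : ℕ, ((i : ℝ) + M + 1) ^ (-β) := tsum_mul_left
    _ ≤ σ ^ 2 / a * ((M : ℝ) ^ (1 - β) / (β - 1)) := by
        gcongr
        exact tsum_nat_add_rpow_neg_le hβ (by exact_mod_cast hM)

lemma tsum_spread_le (hβ : 1 < β) (ha : 0 < a) (han : a ≤ n) :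
    ∑' i : ℕ, σ ^ 2 / (n + a * ((i : ℝ) + 1) ^ β)
      ≤ (2 + 1 / (β - 1)) * (σ ^ 2 / n * (n / a) ^ β⁻¹) := by
  have hn : 0 < n := ha.trans_le han
  have hβ1 : 0 < β - 1 := by linarith
  set R := (n / a) ^ β⁻¹
  have hR : 1 ≤ R := one_le_rpow ((one_le_div ha).2 han) (by positivity)
  set M := ⌈R⌉₊
  have hRM : R ≤ M := Nat.le_ceil R
  have hMR : (M : ℝ) ≤ 2 * R := by linarith [Nat.ceil_lt_add_one (zero_le_one.trans hR)]
  have hM : 0 < M := Nat.cast_pos.1 (show (0 : ℝ) < M by linarith)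
  have head : ∑ i ∈ range M, σ ^ 2 / (n + a * ((i : ℝ) + 1) ^ β) ≤ 2 * (σ ^ 2 / n * R) :=
    calc ∑ i ∈ range M, σ ^ 2 / (n + a * ((i : ℝ) + 1) ^ β)
        ≤ ∑ _i ∈ range M, σ ^ 2 / n :=
          sum_le_sum fun i _ => by gcongr; exact le_add_of_nonneg_right (by positivity)
      _ = M * (σ ^ 2 / n) := by rw [sum_const, card_range, nsmul_eq_mul]
      _ ≤ 2 * R * (σ ^ 2 / n) := by gcongr
      _ = 2 * (σ ^ 2 / n * R) := by ring
  have tail : ∑' i : ℕ, σ ^ 2 / (n + a * (((i + M : ℕ) : ℝ) + 1) ^ β)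
      ≤ 1 / (β - 1) * (σ ^ 2 / n * R) := by
    have hRβ : R ^ β = n / a := rpow_inv_rpow (by positivity) (by positivity)
    have hR1β : R ^ (1 - β) = R * (a / n) := by
      rw [sub_eq_add_neg, rpow_add (by positivity), rpow_one, rpow_neg (by positivity), hRβ,
        inv_div]
    calc _ ≤ σ ^ 2 / a * ((M : ℝ) ^ (1 - β) / (β - 1)) := tsum_spread_nat_add_le hβ hn.le ha hM
      _ ≤ σ ^ 2 / a * (R ^ (1 - β) / (β - 1)) :=
          mul_le_mul_of_nonneg_left (div_le_div_of_nonneg_right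
            (rpow_le_rpow_of_nonpos (zero_lt_one.trans_le hR) hRM (by linarith)) hβ1.le)
            (by positivity)
      _ = 1 / (β - 1) * (σ ^ 2 / n * R) := by rw [hR1β]; field_simp
  rw [← (summable_spread hβ hn.le ha).sum_add_tsum_nat_add M]
  linarith

end

lemma sq_div_mul_rpow_inv_eq {α σ τ m n : ℝ} (hα : 0 < α) (hσ : 0 < σ) (hτ : 0 < τ) (hm : 0 < m)
    (hn : 0 < n) :
    σ ^ 2 / n * (n / (σ ^ 2 * (m / τ))) ^ (1 + 2 * α)⁻¹
      = σ ^ (2 - 2 / (1 + 2 * α)) * (τ / m) ^ (1 / (1 + 2 * α)) * n ^ (-(2 * α / (1 + 2 * α))) := by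
  have hβ : 1 + 2 * α ≠ 0 := by positivity
  have hσ2 : (σ ^ 2) ^ (1 + 2 * α)⁻¹ = σ ^ (2 / (1 + 2 * α)) := by
    rw [← rpow_natCast, ← rpow_mul hσ.le, Nat.cast_ofNat, div_eq_mul_inv]
  have hn' : n ^ (-(2 * α / (1 + 2 * α))) = n ^ (1 + 2 * α)⁻¹ / n := by
    rw [show -(2 * α / (1 + 2 * α)) = (1 + 2 * α)⁻¹ - 1 by field_simp; ring, rpow_sub hn,
      rpow_one]
  rw [show n / (σ ^ 2 * (m / τ)) = n * (τ / m) / σ ^ 2 by field_simp,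
    div_rpow (by positivity) (by positivity), mul_rpow hn.le (by positivity), hσ2,
    rpow_sub hσ, rpow_two, hn', one_div]
  field_simp

/-- Variance and spread asymptotics for the rescaled prior (used in Theorem 3): for every
`α, σ > 0` there exist `0 < c ≤ C` and `K > 0` such that for all integers `m ≥ 1` and all
reals `τ > 0`, `n > 0` with `nτ/m ≥ K`, both
`Σᵢ σ² n/(n + σ² (m/τ) i^{1+2α})²` and `Σᵢ σ²/(n + σ² (m/τ) i^{1+2α})`
lie between `c (τ/m)^{1/(1+2α)} n^{-2α/(1+2α)}` and `C (τ/m)^{1/(1+2α)} n^{-2α/(1+2α)}`. -/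
theorem variance_spread_asymptotics_rescaled_prior
    (α σ : ℝ) (hα : 0 < α) (hσ : 0 < σ) :
    ∃ c C K : ℝ, 0 < c ∧ c ≤ C ∧ 0 < K ∧
      ∀ m : ℕ, 1 ≤ m → ∀ τ n : ℝ, 0 < τ → 0 < n → K ≤ n * τ / (m : ℝ) →
        (c * (τ / (m : ℝ)) ^ (1 / (1 + 2 * α)) * n ^ (-(2 * α / (1 + 2 * α)))
            ≤ (∑' i : ℕ, σ ^ 2 * n
                / (n + σ ^ 2 * ((m : ℝ) / τ) * ((i : ℝ) + 1) ^ (1 + 2 * α)) ^ 2) ∧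
          (∑' i : ℕ, σ ^ 2 * n
                / (n + σ ^ 2 * ((m : ℝ) / τ) * ((i : ℝ) + 1) ^ (1 + 2 * α)) ^ 2)
            ≤ C * (τ / (m : ℝ)) ^ (1 / (1 + 2 * α)) * n ^ (-(2 * α / (1 + 2 * α)))) ∧
        (c * (τ / (m : ℝ)) ^ (1 / (1 + 2 * α)) * n ^ (-(2 * α / (1 + 2 * α)))
            ≤ (∑' i : ℕ, σ ^ 2
                / (n + σ ^ 2 * ((m : ℝ) / τ) * ((i : ℝ) + 1) ^ (1 + 2 * α))) ∧
          (∑' i : ℕ, σ ^ 2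
                / (n + σ ^ 2 * ((m : ℝ) / τ) * ((i : ℝ) + 1) ^ (1 + 2 * α)))
            ≤ C * (τ / (m : ℝ)) ^ (1 / (1 + 2 * α)) * n ^ (-(2 * α / (1 + 2 * α)))) := by
  have hβ : 1 < 1 + 2 * α := by linarith
  set s := σ ^ (2 - 2 / (1 + 2 * α))
  have hs : 0 < s := rpow_pos_of_pos hσ _
  refine ⟨s / 8, (2 + 1 / (1 + 2 * α - 1)) * s, σ ^ 2, by positivity, ?_, by positivity, ?_⟩
  · have : 0 ≤ 1 / (1 + 2 * α - 1) * s := by positivity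
    linarith
  intro m hm τ n hτ hn hK
  have hm' : (0 : ℝ) < m := by exact_mod_cast hm
  set a := σ ^ 2 * ((m : ℝ) / τ)
  have ha : 0 < a := by positivity
  have han : a ≤ n := by
    rw [le_div_iff₀ hm'] at hK
    calc a = σ ^ 2 * m / τ := by ring
      _ ≤ n := by rw [div_le_iff₀ hτ]; linarith
  have hscale : σ ^ 2 / n * (n / a) ^ (1 + 2 * α)⁻¹ = s * _ * _ :=
    sq_div_mul_rpow_inv_eq hα hσ hτ hm' hn
  have lower := le_tsum_variance (σ := σ) hβ ha han
  have upper := tsum_spread_le (σ := σ) hβ ha han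
  have between := tsum_variance_le_tsum_spread (σ := σ) hβ hn.le ha
  rw [hscale] at lower upper
  refine ⟨⟨?_, ?_⟩, ?_, ?_⟩ <;> linarith
end

section
/- (Tail lower bound for the over-smoothed squared bias, key step in Theorem 7.) For every β > 0 there exists c > 0 such that for all σ > 0, all n > 0, and every integer N ≥ (n/σ²)^{1/(2+2β)}, Σ_{i=N}^∞ σ⁴·i^{3+2β}/(n + σ²·i^{2+2β})² ≥ c·N^{-2β}. In particular, with N the least integer ≥ (n/(σ²·√m))^{1/(1+2β)} this yields the lower bound of order (n/√m)^{-2β/(1+2β)} used in the proof of Theorem 7 whenever this N exceeds (n/σ²)^{1/(2+2β)}. -/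
/-!
For `i ≥ N` the threshold on `N` gives `n ≤ σ² i^{2+2β}`, so the denominator is at most
`(2σ² i^{2+2β})²` and the summand is at least `i^{-(1+2β)} / 4`. Keeping only the `N` terms
with `N ≤ i < 2N`, each at least `(2N)^{-(1+2β)} / 4`, leaves `2^{-(1+2β)} N^{-2β} / 4`.
-/

open Finset

noncomputable def oversmoothedBiasTerm (β σ n x : ℝ) : ℝ :=
  σ ^ 4 * x ^ (3 + 2 * β) / (n + σ ^ 2 * x ^ (2 + 2 * β)) ^ 2

lemma oversmoothedBiasTerm_nonneg (β σ n : ℝ) {x : ℝ} (hx : 0 ≤ x) :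
    0 ≤ oversmoothedBiasTerm β σ n x := by
  rw [oversmoothedBiasTerm]
  positivity

lemma oversmoothedBiasTerm_tail_nonneg (β σ n : ℝ) (N i : ℕ) :
    0 ≤ if N ≤ i then oversmoothedBiasTerm β σ n i else 0 := by
  split_ifs
  · exact oversmoothedBiasTerm_nonneg β σ n i.cast_nonneg
  · rfl

lemma sq_div_add_le_one {n s : ℝ} (hn : 0 ≤ n) (hs : 0 ≤ s) : (s / (n + s)) ^ 2 ≤ 1 :=
  pow_le_one₀ (by positivity) (div_le_one_of_le₀ (by linarith) (by positivity))

lemma one_fourth_le_sq_div_add {n s : ℝ} (hn : 0 < n) (hns : n ≤ s) :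
    1 / 4 ≤ (s / (n + s)) ^ 2 := by
  have half_le : 1 / 2 ≤ s / (n + s) := by
    rw [le_div_iff₀ (by linarith)]
    linarith
  calc (1 / 4 : ℝ) = (1 / 2) ^ 2 := by norm_num
    _ ≤ (s / (n + s)) ^ 2 := by gcongr

lemma oversmoothedBiasTerm_eq (β σ n : ℝ) {x : ℝ} (hx : 0 < x) :
    oversmoothedBiasTerm β σ n x =
      (σ ^ 2 * x ^ (2 + 2 * β) / (n + σ ^ 2 * x ^ (2 + 2 * β))) ^ 2 * x ^ (-(1 + 2 * β)) := by
  have hpow : x ^ (3 + 2 * β) = (x ^ (2 + 2 * β)) ^ 2 * x ^ (-(1 + 2 * β)) := by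
    rw [← Real.rpow_mul_natCast hx.le, ← Real.rpow_add hx]
    congr 1
    push_cast
    ring
  rw [oversmoothedBiasTerm, hpow, div_pow]
  ring

lemma oversmoothedBiasTerm_le_rpow (β σ : ℝ) {n x : ℝ} (hn : 0 ≤ n) (hx : 0 < x) :
    oversmoothedBiasTerm β σ n x ≤ x ^ (-(1 + 2 * β)) := by
  rw [oversmoothedBiasTerm_eq β σ n hx]
  exact mul_le_of_le_one_left (by positivity) (sq_div_add_le_one hn (by positivity))

lemma rpow_div_four_le_oversmoothedBiasTerm {β σ n x : ℝ} (hn : 0 < n) (hx : 0 < x)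
    (hdom : n ≤ σ ^ 2 * x ^ (2 + 2 * β)) :
    1 / 4 * x ^ (-(1 + 2 * β)) ≤ oversmoothedBiasTerm β σ n x := by
  rw [oversmoothedBiasTerm_eq β σ n hx]
  gcongr
  exact one_fourth_le_sq_div_add hn hdom

lemma summable_oversmoothedBiasTerm_tail {β : ℝ} (hβ : 0 < β) (σ : ℝ) {n : ℝ} (hn : 0 ≤ n)
    {N : ℕ} (hN : 0 < N) :
    Summable fun i : ℕ => if N ≤ i then oversmoothedBiasTerm β σ n i else 0 := by
  refine Summable.of_nonneg_of_le (oversmoothedBiasTerm_tail_nonneg β σ n N) (fun i => ?_)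
    (Real.summable_nat_rpow.mpr (by linarith : -(1 + 2 * β) < -1))
  split_ifs with hi
  · exact oversmoothedBiasTerm_le_rpow β σ hn (by exact_mod_cast hN.trans_le hi)
  · positivity

lemma rpow_mul_le_sum_Ico_rpow_neg {p : ℝ} (hp : 0 ≤ p) {N : ℕ} (hN : 0 < N) :
    2 ^ (-p) * (N : ℝ) ^ (1 - p) ≤ ∑ i ∈ Ico N (2 * N), (i : ℝ) ^ (-p) := by
  have hNR : (0 : ℝ) < N := by exact_mod_cast hN
  have hterm : ∀ i ∈ Ico N (2 * N), (2 * N : ℝ) ^ (-p) ≤ (i : ℝ) ^ (-p) := by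
    intro i hi
    rw [mem_Ico] at hi
    exact Real.rpow_le_rpow_of_nonpos (hNR.trans_le (by exact_mod_cast hi.1))
      (by exact_mod_cast hi.2.le) (by linarith)
  calc 2 ^ (-p) * (N : ℝ) ^ (1 - p) = N * (2 * N : ℝ) ^ (-p) := by
        rw [Real.mul_rpow zero_le_two hNR.le, sub_eq_add_neg, Real.rpow_add hNR, Real.rpow_one]
        ring
    _ = #(Ico N (2 * N)) • (2 * N : ℝ) ^ (-p) := by
        rw [Nat.card_Ico, show 2 * N - N = N by omega, nsmul_eq_mul]
    _ ≤ ∑ i ∈ Ico N (2 * N), (i : ℝ) ^ (-p) := card_nsmul_le_sum _ _ _ hterm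

lemma le_mul_rpow_of_div_rpow_one_div_le {n a e x : ℝ} (hn : 0 ≤ n) (ha : 0 < a) (he : 0 < e)
    (hx : (n / a) ^ (1 / e) ≤ x) : n ≤ a * x ^ e := by
  have hx0 : 0 ≤ x := (Real.rpow_nonneg (by positivity) _).trans hx
  rwa [one_div, Real.rpow_inv_le_iff_of_pos (by positivity) hx0 he, div_le_iff₀' ha] at hx

/-- Tail lower bound for the over-smoothed squared bias (key step in Theorem 7): for every
`β > 0` there exists `c > 0` such that for all `σ > 0`, all `n > 0`, and every integer
`N ≥ (n/σ²)^{1/(2+2β)}`,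
`Σ_{i=N}^∞ σ⁴ i^{3+2β}/(n + σ² i^{2+2β})² ≥ c N^{-2β}`. -/
theorem oversmoothed_bias_tail_lower_bound
    (β : ℝ) (hβ : 0 < β) :
    ∃ c : ℝ, 0 < c ∧
      ∀ σ : ℝ, 0 < σ → ∀ n : ℝ, 0 < n → ∀ N : ℕ,
        (n / σ ^ 2) ^ (1 / (2 + 2 * β)) ≤ (N : ℝ) →
        c * (N : ℝ) ^ (-(2 * β))
          ≤ ∑' i : ℕ, if N ≤ i then
              σ ^ 4 * (i : ℝ) ^ (3 + 2 * β) / (n + σ ^ 2 * (i : ℝ) ^ (2 + 2 * β)) ^ 2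
            else 0 := by
  refine ⟨1 / 4 * 2 ^ (-(1 + 2 * β)), by positivity, fun σ hσ n hn N hN => ?_⟩
  have hNR : (0 : ℝ) < N := (Real.rpow_pos_of_pos (by positivity) _).trans_le hN
  have hdom : ∀ i : ℕ, N ≤ i → n ≤ σ ^ 2 * (i : ℝ) ^ (2 + 2 * β) := by
    intro i hi
    exact le_mul_rpow_of_div_rpow_one_div_le hn.le (by positivity) (by linarith)
      (hN.trans (Nat.cast_le.mpr hi))
  have hsum := summable_oversmoothedBiasTerm_tail hβ σ hn.le (N := N) (by exact_mod_cast hNR)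
  calc 1 / 4 * 2 ^ (-(1 + 2 * β)) * (N : ℝ) ^ (-(2 * β))
      = 1 / 4 * (2 ^ (-(1 + 2 * β)) * (N : ℝ) ^ (1 - (1 + 2 * β))) := by ring_nf
    _ ≤ ∑ i ∈ Ico N (2 * N), 1 / 4 * (i : ℝ) ^ (-(1 + 2 * β)) := by
        rw [← mul_sum]
        gcongr
        exact rpow_mul_le_sum_Ico_rpow_neg (by linarith) (by exact_mod_cast hNR)
    _ ≤ ∑ i ∈ Ico N (2 * N), if N ≤ i then oversmoothedBiasTerm β σ n i else 0 := by
        refine sum_le_sum fun i hi => ?_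
        rw [mem_Ico] at hi
        rw [if_pos hi.1]
        exact rpow_div_four_le_oversmoothedBiasTerm hn
          (hNR.trans_le (by exact_mod_cast hi.1)) (hdom i hi.1)
    _ ≤ _ := hsum.sum_le_tsum _ fun i _ => oversmoothedBiasTerm_tail_nonneg β σ n N i
end

section
/- (Mean and variance asymptotics of the over-smoothed Gaussian quadratic form, used in Theorem 7.) For every σ, β > 0 there exist constants 0 < c ≤ C and N such that for all n ≥ N, c·n^{-(1+2β)/(2+2β)} ≤ Σ_{i=1}^∞ σ²·n/(n + σ²·i^{2+2β})² ≤ C·n^{-(1+2β)/(2+2β)} and c·n^{-(3+4β)/(2+2β)} ≤ Σ_{i=1}^∞ σ⁴·n²/(n + σ²·i^{2+2β})⁴ ≤ C·n^{-(3+4β)/(2+2β)}. Consequently, if (Uᵢ) are i.i.d. standard Gaussian random variables, the random series S = Σᵢ σ²·n·Uᵢ²/(n + σ²·i^{2+2β})² has mean of exact order n^{-(1+2β)/(2+2β)} and variance of exact order n^{-(3+4β)/(2+2β)}, so its standard deviation is of smaller order than its mean. -/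
/-!
Put `a = 2 + 2β` and `M = n / σ²`; the two series are `M ^ m * ∑ᵢ (M + i ^ a) ^ (-2m)` for
`m = 1, 2`. Writing `M = B ^ a`, the term `(B ^ a + i ^ a) ^ (-p)` lies within a factor
`2 ^ ((a - 1) p)` of `(B + i) ^ (-a p)`, and by the mean value theorem `q (B + i) ^ (-(q + 1))`
is squeezed between consecutive differences of `(B + i) ^ (-q)`, so `∑_{i ≥ 1} (B + i) ^ (-(q + 1))`
lies between `(B + 1) ^ (-q) / q` and `B ^ (-q) / q`. Hence `∑ᵢ (M + i ^ a) ^ (-p) ≍ M ^ (1/a - p)`,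
and the `m`-th series is `≍ M ^ (1/a - m)`, which is `n ^ (-(1 + 2β)/(2 + 2β))` for `m = 1` and
`n ^ (-(3 + 4β)/(2 + 2β))` for `m = 2`.
-/

open Real Filter Topology Asymptotics

theorem rpow_neg_sub_rpow_neg_add_one_mem_Icc {q x : ℝ} (hq : 0 < q) (hx : 0 < x) :
    x ^ (-q) - (x + 1) ^ (-q) ∈ Set.Icc (q * (x + 1) ^ (-(q + 1))) (q * x ^ (-(q + 1))) := by
  obtain ⟨ξ, ⟨hxξ, hξx⟩, hξ⟩ := exists_hasDerivAt_eq_slope (fun t : ℝ => t ^ (-q))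
    (fun t => -q * t ^ (-q - 1)) (lt_add_one x)
    (fun t ht =>
      (continuousAt_rpow_const _ _ (.inl (hx.trans_le ht.1).ne')).continuousWithinAt)
    (fun t ht => hasDerivAt_rpow_const (.inl (hx.trans ht.1).ne'))
  have hslope : x ^ (-q) - (x + 1) ^ (-q) = q * ξ ^ (-(q + 1)) := by
    rw [add_sub_cancel_left, div_one] at hξ
    rw [show -(q + 1) = -q - 1 by ring]
    linarith
  rw [hslope]
  have hq1 : -(q + 1) ≤ 0 := by linarith
  exact ⟨mul_le_mul_of_nonneg_left (rpow_le_rpow_of_nonpos (hx.trans hxξ) hξx.le hq1) hq.le,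
    mul_le_mul_of_nonneg_left (rpow_le_rpow_of_nonpos hx hxξ.le hq1) hq.le⟩

theorem hasSum_sub_succ_of_antitone {g : ℕ → ℝ} (hg : Antitone g)
    (hlim : Tendsto g atTop (𝓝 0)) : HasSum (fun i => g i - g (i + 1)) (g 0) := by
  rw [hasSum_iff_tendsto_nat_of_nonneg (fun i => sub_nonneg.2 (hg i.le_succ))]
  simp_rw [Finset.sum_range_sub']
  simpa using hlim.const_sub (g 0)

theorem tsum_rpow_neg_add_nat_succ_bounds {q x : ℝ} (hq : 0 < q) (hx : 0 < x) :
    Summable (fun i : ℕ => (x + i + 1) ^ (-(q + 1))) ∧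
      (x + 1) ^ (-q) ≤ q * ∑' i : ℕ, (x + i + 1) ^ (-(q + 1)) ∧
      q * ∑' i : ℕ, (x + i + 1) ^ (-(q + 1)) ≤ x ^ (-q) := by
  set g : ℕ → ℝ := fun i => (x + i) ^ (-q)
  have hxi (i : ℕ) : 0 < x + i := by positivity
  have hg : Antitone g := antitone_nat_of_succ_le fun i => by
    simp only [g, Nat.cast_succ, ← add_assoc]
    exact rpow_le_rpow_of_nonpos (hxi i) (by linarith) (by linarith)
  have hlim : Tendsto g atTop (𝓝 0) :=
    (tendsto_rpow_neg_atTop hq).comp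
      (tendsto_atTop_add_const_left _ x tendsto_natCast_atTop_atTop)
  have hstep (i : ℕ) : g (i + 1) - g (i + 2) ≤ q * (x + i + 1) ^ (-(q + 1)) ∧
      q * (x + i + 1) ^ (-(q + 1)) ≤ g i - g (i + 1) := by
    have h₁ := rpow_neg_sub_rpow_neg_add_one_mem_Icc hq (hxi (i + 1))
    have h₂ := rpow_neg_sub_rpow_neg_add_one_mem_Icc hq (hxi i)
    simp only [g, Nat.cast_add, Nat.cast_one, Nat.cast_ofNat] at h₁ h₂ ⊢
    ring_nf at h₁ h₂ ⊢
    exact ⟨h₁.2, h₂.1⟩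
  have hsum : Summable (fun i : ℕ => q * (x + i + 1) ^ (-(q + 1))) :=
    (hasSum_sub_succ_of_antitone hg hlim).summable.of_nonneg_of_le
      (fun i => by positivity) (fun i => (hstep i).2)
  refine ⟨(summable_mul_left_iff hq.ne').1 hsum, ?_, ?_⟩
  · rw [← tsum_mul_left]
    have := hasSum_le (fun i => (hstep i).1)
      (hasSum_sub_succ_of_antitone (fun i j hij => hg (by omega))
        (hlim.comp (tendsto_add_atTop_nat 1))) hsum.hasSum
    simpa [g, add_assoc] using this
  · rw [← tsum_mul_left]
    simpa [g] using
      hasSum_le (fun i => (hstep i).2) hsum.hasSum (hasSum_sub_succ_of_antitone hg hlim)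

theorem rpow_add_rpow_rpow_neg_mem_Icc {a p u v : ℝ} (ha : 1 ≤ a) (hp : 0 ≤ p) (hu : 0 ≤ u)
    (hv : 0 < v) :
    (u ^ a + v ^ a) ^ (-p) ∈
      Set.Icc ((u + v) ^ (-(a * p))) (2 ^ ((a - 1) * p) * (u + v) ^ (-(a * p))) := by
  have hsum_le : u ^ a + v ^ a ≤ (u + v) ^ a := add_rpow_le_rpow_add hu hv.le ha
  have hle_sum : (u + v) ^ a ≤ 2 ^ (a - 1) * (u ^ a + v ^ a) := by
    lift u to NNReal using hu
    lift v to NNReal using hv.le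
    exact_mod_cast NNReal.rpow_add_le_mul_rpow_add_rpow u v ha
  have hpos : 0 < u ^ a + v ^ a := by positivity
  have hp' : -p ≤ 0 := neg_nonpos.2 hp
  have h2 : (0 : ℝ) < 2 ^ (a - 1) := by positivity
  rw [neg_mul_eq_mul_neg, rpow_mul (by positivity)]
  refine ⟨rpow_le_rpow_of_nonpos hpos hsum_le hp', ?_⟩
  calc (u ^ a + v ^ a) ^ (-p) ≤ ((u + v) ^ a / 2 ^ (a - 1)) ^ (-p) :=
        rpow_le_rpow_of_nonpos (by positivity) ((div_le_iff₀' h2).2 hle_sum) hp'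
    _ = 2 ^ ((a - 1) * p) * ((u + v) ^ a) ^ (-p) := by
        rw [div_rpow (by positivity) h2.le, rpow_neg h2.le, ← rpow_mul zero_le_two, div_inv_eq_mul]
        ring

theorem tsum_rpow_add_rpow_rpow_neg_bounds {a p B : ℝ} (ha : 1 ≤ a) (hap : 1 < a * p)
    (hB : 1 ≤ B) :
    2 ^ (-(a * p - 1)) / (a * p - 1) * B ^ (-(a * p - 1))
        ≤ ∑' i : ℕ, (B ^ a + ((i : ℝ) + 1) ^ a) ^ (-p) ∧
      ∑' i : ℕ, (B ^ a + ((i : ℝ) + 1) ^ a) ^ (-p)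
        ≤ 2 ^ ((a - 1) * p) / (a * p - 1) * B ^ (-(a * p - 1)) := by
  set q := a * p - 1
  have hq : 0 < q := sub_pos.2 hap
  have hp : 0 ≤ p := by nlinarith
  have hB0 : 0 < B := one_pos.trans_le hB
  have hterm (i : ℕ) := rpow_add_rpow_rpow_neg_mem_Icc ha hp hB0.le (Nat.cast_add_one_pos i)
  have hexp : -(a * p) = -(q + 1) := by ring
  simp only [hexp, ← add_assoc] at hterm
  obtain ⟨hsum, hlow, hupp⟩ := tsum_rpow_neg_add_nat_succ_bounds hq hB0
  have hsum' : Summable (fun i : ℕ => (B ^ a + ((i : ℝ) + 1) ^ a) ^ (-p)) :=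
    (hsum.mul_left _).of_nonneg_of_le (fun i => by positivity) (fun i => (hterm i).2)
  constructor
  · calc 2 ^ (-q) / q * B ^ (-q) = (2 * B) ^ (-q) / q := by
          rw [mul_rpow zero_le_two hB0.le]; ring
      _ ≤ (B + 1) ^ (-q) / q :=
          div_le_div_of_nonneg_right
            (rpow_le_rpow_of_nonpos (by positivity) (by linarith) (by linarith)) hq.le
      _ ≤ ∑' i : ℕ, (B + i + 1) ^ (-(q + 1)) := by rw [div_le_iff₀' hq]; exact hlow
      _ ≤ ∑' i : ℕ, (B ^ a + ((i : ℝ) + 1) ^ a) ^ (-p) :=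
          hsum.tsum_le_tsum (fun i => (hterm i).1) hsum'
  · calc ∑' i : ℕ, (B ^ a + ((i : ℝ) + 1) ^ a) ^ (-p)
        ≤ ∑' i : ℕ, 2 ^ ((a - 1) * p) * (B + i + 1) ^ (-(q + 1)) :=
          hsum'.tsum_le_tsum (fun i => (hterm i).2) (hsum.mul_left _)
      _ = 2 ^ ((a - 1) * p) * ∑' i : ℕ, (B + i + 1) ^ (-(q + 1)) := tsum_mul_left
      _ ≤ 2 ^ ((a - 1) * p) / q * B ^ (-q) := by
          rw [div_mul_eq_mul_div, le_div_iff₀ hq, mul_assoc]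
          gcongr
          linarith

theorem isTheta_of_eventually_bounds {α : Type*} {l : Filter α} {f g : α → ℝ} {c C : ℝ}
    (hc : 0 < c) (h : ∀ᶠ x in l, 0 ≤ g x ∧ c * g x ≤ f x ∧ f x ≤ C * g x) : f =Θ[l] g := by
  refine ⟨.of_bound C ?_, .of_bound c⁻¹ ?_⟩ <;> filter_upwards [h] with x ⟨hg, hlow, hupp⟩
  · have hf : 0 ≤ f x := (mul_nonneg hc.le hg).trans hlow
    rwa [norm_of_nonneg hf, norm_of_nonneg hg]
  · have hf : 0 ≤ f x := (mul_nonneg hc.le hg).trans hlow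
    rw [norm_of_nonneg hf, norm_of_nonneg hg, le_inv_mul_iff₀ hc]
    exact hlow

theorem isTheta_tsum_add_rpow_rpow_neg {a p : ℝ} (ha : 1 ≤ a) (hap : 1 < a * p) :
    (fun M : ℝ => ∑' i : ℕ, (M + ((i : ℝ) + 1) ^ a) ^ (-p))
      =Θ[atTop] fun M => M ^ (1 / a - p) := by
  have ha0 : a ≠ 0 := by positivity
  refine isTheta_of_eventually_bounds (C := 2 ^ ((a - 1) * p) / (a * p - 1))
    (by positivity : (0 : ℝ) < 2 ^ (-(a * p - 1)) / (a * p - 1)) ?_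
  filter_upwards [eventually_ge_atTop 1] with M hM
  have hM0 : 0 ≤ M := zero_le_one.trans hM
  have hB : 1 ≤ M ^ a⁻¹ := one_le_rpow hM (by positivity)
  have hexp : (M ^ a⁻¹) ^ (-(a * p - 1)) = M ^ (1 / a - p) := by
    rw [← rpow_mul hM0]; congr 1; field_simp; ring
  have := tsum_rpow_add_rpow_rpow_neg_bounds ha hap hB
  rw [rpow_inv_rpow hM0 ha0, hexp] at this
  exact ⟨rpow_nonneg hM0 _, this⟩

theorem isTheta_tsum_mul_pow_div_add_rpow_pow {a s : ℝ} {m : ℕ} (ha : 1 ≤ a) (hs : 0 < s)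
    (ham : 1 < a * (2 * m)) :
    (fun n : ℝ => ∑' i : ℕ, (s * n) ^ m / (n + s * ((i : ℝ) + 1) ^ a) ^ (2 * m))
      =Θ[atTop] fun n => n ^ (1 / a - m) := by
  have hS := isTheta_tsum_add_rpow_rpow_neg ha ham
  have hk : Tendsto (fun n => n / s) atTop atTop := tendsto_id.atTop_div_const hs
  have hprod := (isTheta_refl (fun n : ℝ => (n / s) ^ (m : ℝ)) atTop).mul
    (⟨hS.1.comp_tendsto hk, hS.2.comp_tendsto hk⟩ :
      (fun n => ∑' i : ℕ, (n / s + ((i : ℝ) + 1) ^ a) ^ (-(2 * (m : ℝ)))) =Θ[atTop]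
        fun n => (n / s) ^ (1 / a - 2 * m))
  refine (EventuallyEq.trans_isTheta ?_ (hprod.trans_eventuallyEq ?_)).trans
    ((isTheta_refl _ _).const_mul_left (c := s ^ (-(1 / a - m))) (by positivity))
  all_goals filter_upwards [eventually_gt_atTop 0] with n hn
  · simp only [← tsum_mul_left]
    congr 1 with i
    have hY : n / s + ((i : ℝ) + 1) ^ a = (n + s * ((i : ℝ) + 1) ^ a) / s := by field_simp
    rw [rpow_neg (by positivity), show 2 * (m : ℝ) = ((2 * m : ℕ) : ℝ) by push_cast; ring,
      rpow_natCast, rpow_natCast, hY, div_pow, div_pow, inv_div, pow_mul]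
    field_simp
    ring
  · rw [← rpow_add (by positivity), div_rpow hn.le hs.le, rpow_neg hs.le]
    ring_nf

theorem Asymptotics.IsTheta.exists_bounds {α : Type*} {l : Filter α} {f g : α → ℝ} (h : f =Θ[l] g)
    (hf : ∀ᶠ x in l, 0 ≤ f x) (hg : ∀ᶠ x in l, 0 ≤ g x) :
    ∃ c C, 0 < c ∧ c ≤ C ∧ ∀ᶠ x in l, c * g x ≤ f x ∧ f x ≤ C * g x := by
  obtain ⟨C, hC⟩ := h.1.bound
  obtain ⟨c, hc, hcw⟩ := h.2.exists_pos
  refine ⟨c⁻¹, max C c⁻¹, inv_pos.2 hc, le_max_right _ _, ?_⟩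
  filter_upwards [hC, hcw.bound, hf, hg] with x hupp hlow hfx hgx
  rw [norm_of_nonneg hfx, norm_of_nonneg hgx] at hupp hlow
  exact ⟨(inv_mul_le_iff₀ hc).2 hlow, hupp.trans (by gcongr; exact le_max_left _ _)⟩

theorem exists_uniform_bounds_of_isTheta {α : Type*} [SemilatticeSup α] [Nonempty α]
    {f₁ g₁ f₂ g₂ : α → ℝ} (h₁ : f₁ =Θ[atTop] g₁) (h₂ : f₂ =Θ[atTop] g₂)
    (hf₁ : ∀ᶠ x in atTop, 0 ≤ f₁ x) (hg₁ : ∀ᶠ x in atTop, 0 ≤ g₁ x)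
    (hf₂ : ∀ᶠ x in atTop, 0 ≤ f₂ x) (hg₂ : ∀ᶠ x in atTop, 0 ≤ g₂ x) :
    ∃ c C N, 0 < c ∧ c ≤ C ∧ ∀ x, N ≤ x →
      (c * g₁ x ≤ f₁ x ∧ f₁ x ≤ C * g₁ x) ∧ (c * g₂ x ≤ f₂ x ∧ f₂ x ≤ C * g₂ x) := by
  obtain ⟨c₁, C₁, hc₁, hcC₁, hb₁⟩ := h₁.exists_bounds hf₁ hg₁
  obtain ⟨c₂, C₂, hc₂, -, hb₂⟩ := h₂.exists_bounds hf₂ hg₂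
  obtain ⟨N, hN⟩ := eventually_atTop.1 (hb₁.and (hb₂.and (hg₁.and hg₂)))
  refine ⟨min c₁ c₂, max C₁ C₂, N, lt_min hc₁ hc₂,
    (min_le_left _ _).trans (hcC₁.trans (le_max_left _ _)), fun x hx => ?_⟩
  obtain ⟨⟨hlow₁, hupp₁⟩, ⟨hlow₂, hupp₂⟩, hg₁x, hg₂x⟩ := hN x hx
  exact ⟨⟨(mul_le_mul_of_nonneg_right (min_le_left _ _) hg₁x).trans hlow₁,
      hupp₁.trans (mul_le_mul_of_nonneg_right (le_max_left _ _) hg₁x)⟩,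
    ⟨(mul_le_mul_of_nonneg_right (min_le_right _ _) hg₂x).trans hlow₂,
      hupp₂.trans (mul_le_mul_of_nonneg_right (le_max_right _ _) hg₂x)⟩⟩

/-- Mean and variance asymptotics of the over-smoothed Gaussian quadratic form (used in
Theorem 7): for every `σ, β > 0` there exist `0 < c ≤ C` and `N` such that for all `n ≥ N`,
`c n^{-(1+2β)/(2+2β)} ≤ Σᵢ σ² n/(n + σ² i^{2+2β})² ≤ C n^{-(1+2β)/(2+2β)}` and
`c n^{-(3+4β)/(2+2β)} ≤ Σᵢ σ⁴ n²/(n + σ² i^{2+2β})⁴ ≤ C n^{-(3+4β)/(2+2β)}`, the series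
running over the positive integers (coordinate `i : ℕ` is the integer `i + 1`). These are
respectively the mean of the Gaussian quadratic form `S = Σᵢ σ² n Uᵢ²/(n + σ² i^{2+2β})²`
and half its variance, so the standard deviation of `S` is of smaller order than its
mean. -/
theorem oversmoothed_quadratic_form_mean_variance_asymptotics
    (σ β : ℝ) (hσ : 0 < σ) (hβ : 0 < β) :
    ∃ c C N : ℝ, 0 < c ∧ c ≤ C ∧
      ∀ n : ℝ, N ≤ n →
        (c * n ^ (-((1 + 2 * β) / (2 + 2 * β)))
            ≤ (∑' i : ℕ, σ ^ 2 * n / (n + σ ^ 2 * ((i : ℝ) + 1) ^ (2 + 2 * β)) ^ 2) ∧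
          (∑' i : ℕ, σ ^ 2 * n / (n + σ ^ 2 * ((i : ℝ) + 1) ^ (2 + 2 * β)) ^ 2)
            ≤ C * n ^ (-((1 + 2 * β) / (2 + 2 * β)))) ∧
        (c * n ^ (-((3 + 4 * β) / (2 + 2 * β)))
            ≤ (∑' i : ℕ, σ ^ 4 * n ^ 2 / (n + σ ^ 2 * ((i : ℝ) + 1) ^ (2 + 2 * β)) ^ 4) ∧
          (∑' i : ℕ, σ ^ 4 * n ^ 2 / (n + σ ^ 2 * ((i : ℝ) + 1) ^ (2 + 2 * β)) ^ 4)
            ≤ C * n ^ (-((3 + 4 * β) / (2 + 2 * β)))) := by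
  have ha : 1 ≤ 2 + 2 * β := by linarith
  have hmean := isTheta_tsum_mul_pow_div_add_rpow_pow (m := 1) ha (pow_pos hσ 2)
    (by push_cast; linarith)
  have hvar := isTheta_tsum_mul_pow_div_add_rpow_pow (m := 2) ha (pow_pos hσ 2)
    (by push_cast; linarith)
  have hexp₁ : 1 / (2 + 2 * β) - ((1 : ℕ) : ℝ) = -((1 + 2 * β) / (2 + 2 * β)) := by
    field_simp; ring
  have hexp₂ : 1 / (2 + 2 * β) - ((2 : ℕ) : ℝ) = -((3 + 4 * β) / (2 + 2 * β)) := by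
    field_simp; ring
  simp only [hexp₁, pow_one, mul_one] at hmean
  simp only [hexp₂, mul_pow, ← pow_mul] at hvar
  refine exists_uniform_bounds_of_isTheta hmean hvar ?_ ?_ ?_ ?_ <;>
    filter_upwards [eventually_ge_atTop 0] with n hn
  all_goals positivity
end
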